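/- arXiv:1512.07478 — 8 statements merged into one kernel-verified Lean document; each statement's English description precedes it below -/
import Mathlib

section
/- A mapping f : X → Y between topological spaces is quasi-continuous (i.e., for every point x, every neighborhood U of x and every neighborhood V of f(x), there exists a nonempty open set G ⊆ U with f(G) ⊆ V) if and only if for every nonempty open set G ⊆ X and every set A that is dense in G, we have f(G) ⊆ closure(f(A)). -/
open Topology Set

/-- A map is quasi-continuous at `x₀` if every neighborhood of `x₀` contains a nonempty open
set mapped into any prescribed neighborhood of `f x₀`. -/
def QuasiContinuousAt {X Y : Type*} [TopologicalSpace X] [TopologicalSpace Y]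
    (f : X → Y) (x₀ : X) : Prop :=
  ∀ U ∈ 𝓝 x₀, ∀ V ∈ 𝓝 (f x₀), ∃ G : Set X, IsOpen G ∧ G.Nonempty ∧ G ⊆ U ∧ f '' G ⊆ V

/-- A map is quasi-continuous if it is quasi-continuous at every point. -/
def QuasiContinuous {X Y : Type*} [TopologicalSpace X] [TopologicalSpace Y]
    (f : X → Y) : Prop :=
  ∀ x : X, QuasiContinuousAt f x

/-- `f : X × Y → Z` has the Namioka property if there is a dense `Gδ` set `A ⊆ X` such that
`f` is jointly continuous at every point of `A × Y`. -/
def NamiokaProperty {X Y Z : Type*} [TopologicalSpace X] [TopologicalSpace Y]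
    [TopologicalSpace Z] (f : X × Y → Z) : Prop :=
  ∃ A : Set X, Dense A ∧ IsGδ A ∧ ∀ x ∈ A, ∀ y : Y, ContinuousAt f (x, y)

/-- `Y` is a Kempisty space if for every Baire space `X`, every `f : X × Y → ℝ`
quasi-continuous in the first variable and continuous in the second has the Namioka property. -/
def KempistySpace (Y : Type*) [TopologicalSpace Y] : Prop :=
  ∀ (X : Type*) (_ : TopologicalSpace X), BaireSpace X →
    ∀ f : X × Y → ℝ,
      (∀ y : Y, QuasiContinuous fun x => f (x, y)) →
      (∀ x : X, Continuous fun y => f (x, y)) →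
      NamiokaProperty f

/- A nonempty open set mapped into a neighbourhood of `f x` meets every set dense near `x`, which
gives one direction. Conversely, for open `W ∋ x` and `V ∋ f x`, the open set
`W \ closure (W \ f ⁻¹' V)` is mapped into `V`; the density criterion, applied to `W` and
`W \ f ⁻¹' V`, shows that this set is nonempty. -/

theorem image_diff_closure_diff_preimage_subset {X Y : Type*} [TopologicalSpace X] (f : X → Y)
    (W : Set X) (V : Set Y) : f '' (W \ closure (W \ f ⁻¹' V)) ⊆ V := by
  rintro _ ⟨z, ⟨hzW, hz⟩, rfl⟩
  by_contra hzV
  exact hz (subset_closure ⟨hzW, hzV⟩)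

section

variable {X Y : Type*} [TopologicalSpace X] [TopologicalSpace Y] {f : X → Y} {x : X}

theorem QuasiContinuousAt.mem_closure_image (hf : QuasiContinuousAt f x) {W A : Set X}
    (hW : W ∈ 𝓝 x) (hWA : W ⊆ closure A) : f x ∈ closure (f '' A) := by
  refine mem_closure_iff_nhds.mpr fun V hV => ?_
  obtain ⟨G, hG, hGne, hGW, hGV⟩ := hf W hW V hV
  obtain ⟨a, haA, haG⟩ : (A ∩ G).Nonempty :=
    (closure_inter_open_nonempty_iff hG).mp (hGne.mono fun z hz => ⟨hWA (hGW hz), hz⟩)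
  exact ⟨f a, hGV (mem_image_of_mem f haG), mem_image_of_mem f haA⟩

theorem quasiContinuousAt_of_mem_closure_image
    (h : ∀ W, IsOpen W → x ∈ W → ∀ A ⊆ W, W ⊆ closure A → f x ∈ closure (f '' A)) :
    QuasiContinuousAt f x := by
  intro U hU V hV
  set W := interior U
  set B := W \ f ⁻¹' V
  have hxW : x ∈ W := mem_interior_iff_mem_nhds.mpr hU
  have hfx : f x ∉ closure (f '' B) := fun hfx => by
    obtain ⟨_, hyV, b, hb, rfl⟩ := mem_closure_iff_nhds.mp hfx V hV
    exact hb.2 hyV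
  have hWB : ¬W ⊆ closure B := fun hWB => hfx (h W isOpen_interior hxW B sdiff_subset hWB)
  exact ⟨W \ closure B, isOpen_interior.sdiff isClosed_closure, sdiff_nonempty.mpr hWB,
    sdiff_subset.trans interior_subset, image_diff_closure_diff_preimage_subset f W V⟩

end

/-- `f` is quasi-continuous iff for every nonempty open `G` and every set `A`
dense in `G`, `f '' G ⊆ closure (f '' A)`. -/
theorem quasiContinuous_iff_forall_open_dense {X Y : Type*}
    [TopologicalSpace X] [TopologicalSpace Y] (f : X → Y) :
    QuasiContinuous f ↔
      ∀ G : Set X, IsOpen G → G.Nonempty →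
        ∀ A : Set X, A ⊆ G → G ⊆ closure A → f '' G ⊆ closure (f '' A) := by
  refine ⟨fun hf G hG _ A _ hGA => ?_, fun h x =>
    quasiContinuousAt_of_mem_closure_image fun W hW hxW A hAW hWA =>
      h W hW ⟨x, hxW⟩ A hAW hWA (mem_image_of_mem f hxW)⟩
  rintro _ ⟨x, hx, rfl⟩
  exact (hf x).mem_closure_image (hG.mem_nhds hx) hGA
end

section
/- Let T be a set, (X_t : t ∈ T) a family of compact spaces, X a compact subspace of the product ∏_{t∈T} X_t, f : X → ℝ a continuous map, and ε > 0. Then there exists a finite subset T₀ ⊆ T such that |f(x') − f(x'')| < ε whenever x', x'' ∈ X agree on all coordinates in T₀. -/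
/-!
Continuity at a point `x` of `X` gives a cylinder around `x`, cut out by finitely many
coordinates, on which `f` stays `ε / 2`-close to `f x`. Finitely many such cylinders cover the
compact set `X`; the union of their coordinate sets is `T₀`. Points agreeing on `T₀` lie in the
same cylinder as soon as one of them does, so the triangle inequality through its centre applies.
-/

open Set Topology

section

variable {T : Type*} {Xt : T → Type*} [∀ t, TopologicalSpace (Xt t)]
  {α : Type*} [PseudoMetricSpace α]

theorem ContinuousWithinAt.exists_finset_pi_dist_lt {X : Set (∀ t, Xt t)}
    {f : (∀ t, Xt t) → α} {x : ∀ t, Xt t} (hf : ContinuousWithinAt f X x)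
    {δ : ℝ} (hδ : 0 < δ) :
    ∃ (I : Finset T) (u : ∀ t, Set (Xt t)), (∀ t, u t ∈ 𝓝 (x t)) ∧
      ∀ y ∈ (I : Set T).pi u ∩ X, dist (f y) (f x) < δ := by
  obtain ⟨U, hU, hUX⟩ :=
    mem_nhdsWithin_iff_exists_mem_nhds_inter.1 (hf (Metric.ball_mem_nhds _ hδ))
  rw [nhds_pi] at hU
  obtain ⟨I, u, hu, hIU⟩ := Filter.mem_pi'.1 hU
  exact ⟨I, u, hu, fun y hy => hUX ⟨hIU hy.1, hy.2⟩⟩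

theorem IsCompact.exists_finset_dist_lt_of_continuousOn {X : Set (∀ t, Xt t)} (hX : IsCompact X)
    {f : (∀ t, Xt t) → α} (hf : ContinuousOn f X) {ε : ℝ} (hε : 0 < ε) :
    ∃ T₀ : Finset T, ∀ x' ∈ X, ∀ x'' ∈ X,
      (∀ t ∈ T₀, x' t = x'' t) → dist (f x') (f x'') < ε := by
  classical
  choose! I u hu hclose using
    fun x (hx : x ∈ X) => (hf x hx).exists_finset_pi_dist_lt (half_pos hε)
  obtain ⟨s, hsX, hcover⟩ := hX.elim_nhds_subcover (fun x => (I x : Set T).pi (u x))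
    fun x hx => set_pi_mem_nhds (I x).finite_toSet fun t _ => hu x hx t
  refine ⟨s.biUnion I, fun x' hx' x'' hx'' hagree => ?_⟩
  obtain ⟨x, hxs, hx'x⟩ := mem_iUnion₂.1 (hcover hx')
  have hxX := hsX x hxs
  have hx''x : x'' ∈ (I x : Set T).pi (u x) := fun t ht =>
    hagree t (Finset.mem_biUnion.2 ⟨x, hxs, ht⟩) ▸ hx'x t ht
  calc dist (f x') (f x'')
      ≤ dist (f x') (f x) + dist (f x'') (f x) := dist_triangle_right _ _ _
    _ < ε / 2 + ε / 2 :=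
      add_lt_add (hclose x hxX x' ⟨hx'x, hx'⟩) (hclose x hxX x'' ⟨hx''x, hx''⟩)
    _ = ε := add_halves ε

end

theorem exists_finset_coords_of_continuousOn_general {T : Type*} {Xt : T → Type*}
    [∀ t, TopologicalSpace (Xt t)]
    (X : Set (∀ t, Xt t)) (hX : IsCompact X)
    (f : (∀ t, Xt t) → ℝ) (hf : ContinuousOn f X)
    (ε : ℝ) (hε : 0 < ε) :
    ∃ T₀ : Finset T, ∀ x' ∈ X, ∀ x'' ∈ X,
      (∀ t ∈ T₀, x' t = x'' t) → |f x' - f x''| < ε := by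
  simpa only [Real.dist_eq] using hX.exists_finset_dist_lt_of_continuousOn hf hε

/-- a continuous real function on a compact subset of a product depends,
up to `ε`, on finitely many coordinates. -/
theorem exists_finset_coords_of_continuousOn {T : Type*} {Xt : T → Type*}
    [∀ t, TopologicalSpace (Xt t)] [∀ t, CompactSpace (Xt t)]
    (X : Set (∀ t, Xt t)) (hX : IsCompact X)
    (f : (∀ t, Xt t) → ℝ) (hf : ContinuousOn f X)
    (ε : ℝ) (hε : 0 < ε) :
    ∃ T₀ : Finset T, ∀ x' ∈ X, ∀ x'' ∈ X,
      (∀ t ∈ T₀, x' t = x'' t) → |f x' - f x''| < ε :=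
  exists_finset_coords_of_continuousOn_general X hX f hf ε hε
end

section
/- Let X be a Baire space, Y ⊆ [0,1]^T a compact subspace, Σ = {x ∈ [0,1]^T : the support {t : x(t) ≠ 0} is countable}, and f : X × Y → ℝ a function continuous in the second variable. Suppose B ⊆ Y ∩ Σ is dense in Y and for every b ∈ B the function x ↦ f(x,b) is quasi-continuous on X. Then there exists a dense G_δ subset A ⊆ X such that f is jointly continuous at every point of A × Y. -/
open Topology

/-!
Call a countable set `S` of coordinates rich if truncation `y ↦ 1_S · y` maps `Y` into itself
and the points of `B` supported in `S` are dense in the compact set `Y_S` of points of `Y`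
supported in `S`; every countable set of coordinates lies in a rich one. For rich `S`, Baire
category over the countably many finite-coordinate moduli of continuity, together with the
quasi-continuity of finitely many sections `f (·, b)` forming a net of `Y_S`, makes the
sections over `Y_S` uniformly almost constant on some open subset of any open set. A
Banach–Mazur game shows that on some open subset of any open set the sections are also
uniformly close to their truncations to a suitable rich `S`: otherwise a play would produce a
point `x` and pairs `b_k, d_k` whose coordinatewise differences tend to zero while
`|f (x, b_k) - f (x, d_k)|` stays bounded below, against compactness and the continuity of
`f (x, ·)`. Hence every nonempty open set contains one on which all sections vary by less than
any given `ε`, and the sets of points having such neighbourhoods for `ε = 1 / (m + 1)` are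
dense and open.
-/

open Filter Set Function

section QuasiContinuity

variable {X : Type*} [TopologicalSpace X]

theorem QuasiContinuousAt.exists_isOpen_abs_sub_lt {g : X → ℝ} {x₀ : X}
    (hg : QuasiContinuousAt g x₀) {U : Set X} (hU : U ∈ 𝓝 x₀) {γ : ℝ} (hγ : 0 < γ) :
    ∃ P, IsOpen P ∧ P.Nonempty ∧ P ⊆ U ∧ ∀ x ∈ P, |g x - g x₀| < γ := by
  obtain ⟨P, hPo, hPne, hPU, hPg⟩ := hg U hU _ (Metric.ball_mem_nhds (g x₀) hγ)
  exact ⟨P, hPo, hPne, hPU, fun x hx => Real.dist_eq _ _ ▸ hPg (mem_image_of_mem g hx)⟩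

theorem exists_isOpen_forall_abs_sub_lt_of_quasiContinuous {ι : Type*} (s : Finset ι)
    {g : ι → X → ℝ} (hg : ∀ i ∈ s, QuasiContinuous (g i)) {V : Set X} (hV : IsOpen V)
    (hVne : V.Nonempty) {γ : ℝ} (hγ : 0 < γ) :
    ∃ G, IsOpen G ∧ G.Nonempty ∧ G ⊆ V ∧ ∀ i ∈ s, ∀ x ∈ G, ∀ x' ∈ G, |g i x - g i x'| < γ := by
  classical
  induction s using Finset.induction_on with
  | empty => exact ⟨V, hV, hVne, subset_rfl, by simp⟩
  | insert i s _ ih =>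
    obtain ⟨G, hGo, ⟨x₀, hx₀⟩, hGV, hG⟩ := ih fun j hj => hg j (Finset.mem_insert_of_mem hj)
    obtain ⟨P, hPo, hPne, hPG, hP⟩ :=
      (hg i (Finset.mem_insert_self i s) x₀).exists_isOpen_abs_sub_lt (hGo.mem_nhds hx₀)
        (half_pos hγ)
    refine ⟨P, hPo, hPne, hPG.trans hGV, fun j hj x hx x' hx' => ?_⟩
    rcases Finset.mem_insert.1 hj with rfl | hj
    · have := abs_sub_lt_iff.1 (hP x hx)
      have := abs_sub_lt_iff.1 (hP x' hx')
      exact abs_sub_lt_iff.2 ⟨by linarith, by linarith⟩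
    · exact hG j hj x (hPG hx) x' (hPG hx')

end QuasiContinuity

section Baire

variable {X : Type*} [TopologicalSpace X] [BaireSpace X]

theorem exists_isOpen_subset_closure_of_iUnion_eq_univ {ι : Type*} [Countable ι]
    {E : ι → Set X} (hE : ⋃ i, E i = univ) {H : Set X} (hH : IsOpen H) (hHne : H.Nonempty) :
    ∃ i V, IsOpen V ∧ V.Nonempty ∧ V ⊆ H ∧ V ⊆ closure (E i) := by
  have hcover : ⋃ i, closure (E i) = univ :=
    eq_univ_of_univ_subset (hE ▸ iUnion_mono fun i => subset_closure)
  obtain ⟨x, hxH, hx⟩ :=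
    (dense_iUnion_interior_of_closed (fun i => isClosed_closure) hcover).inter_open_nonempty
      H hH hHne
  obtain ⟨i, hi⟩ := mem_iUnion.1 hx
  exact ⟨i, H ∩ interior (closure (E i)), hH.inter isOpen_interior, ⟨x, hxH, hi⟩,
    inter_subset_left, inter_subset_right.trans interior_subset⟩

end Baire

section BanachMazur

variable {X N : Type*} [TopologicalSpace X] {G : N → Set X} {R : N → N → Prop}

/-- Zorn: a maximal disjoint family of responses to open subsets of the `G n`, `n ∈ A`, is
dense wherever `⋃ n ∈ A, G n` is. -/
theorem exists_pairwiseDisjoint_responses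
    (hR : ∀ n H, IsOpen H → H.Nonempty → H ⊆ G n → ∃ n', R n n' ∧ (G n').Nonempty ∧ G n' ⊆ H)
    (hG : ∀ n, IsOpen (G n)) {W : Set X} {A : Set N} (hA : W ⊆ closure (⋃ n ∈ A, G n)) :
    ∃ A' : Set N, A'.PairwiseDisjoint G ∧ W ⊆ closure (⋃ n ∈ A', G n) ∧
      ∀ n' ∈ A', ∃ n ∈ A, R n n' ∧ G n' ⊆ G n := by
  set C : Set (Set N) := {A' | A'.PairwiseDisjoint G ∧
    ∀ n' ∈ A', (G n').Nonempty ∧ ∃ n ∈ A, R n n' ∧ G n' ⊆ G n}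
  obtain ⟨M, ⟨hMdisj, hMresp⟩, hMmax⟩ := zorn_subset C fun c hcC hc =>
    ⟨⋃₀ c, ⟨(pairwiseDisjoint_sUnion hc.directedOn).2 fun a ha => (hcC ha).1,
      fun n' ⟨a, ha, hn'⟩ => (hcC ha).2 n' hn'⟩, fun _ => subset_sUnion_of_mem⟩
  refine ⟨M, hMdisj, fun x hxW => by_contra fun hx => ?_, fun n' hn' => (hMresp n' hn').2⟩
  set O := (closure (⋃ n ∈ M, G n))ᶜ
  obtain ⟨y, hyO, hyA⟩ := mem_closure_iff.1 (hA hxW) O isClosed_closure.isOpen_compl hx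
  obtain ⟨n, hnA, hyn⟩ := mem_iUnion₂.1 hyA
  obtain ⟨n', hR', hn'ne, hn'sub⟩ :=
    hR n (O ∩ G n) (isClosed_closure.isOpen_compl.inter (hG n)) ⟨y, hyO, hyn⟩ inter_subset_right
  have hn'O : G n' ⊆ O := hn'sub.trans inter_subset_left
  have hdisj : ∀ m ∈ M, Disjoint (G n') (G m) := fun m hm =>
    disjoint_compl_left.mono hn'O (subset_closure.trans' (subset_biUnion_of_mem hm))
  have hins : insert n' M ∈ C := by
    refine ⟨hMdisj.insert fun m hm _ => hdisj m hm, fun m hm => ?_⟩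
    rcases mem_insert_iff.1 hm with rfl | hm
    · exact ⟨hn'ne, n, hnA, hR', hn'sub.trans inter_subset_right⟩
    · exact hMresp m hm
  have hn'M : n' ∈ M := hMmax hins (subset_insert _ _) (mem_insert _ _)
  obtain ⟨z, hz⟩ := hn'ne
  exact hn'O hz (subset_closure (mem_biUnion hn'M hz))

/-- The Banach–Mazur game with positions `n` carrying open sets `G n`, where `R n n'` with
`∅ ≠ G n' ⊆ H` is a legal answer to the move `H ⊆ G n`: in a Baire space no strategy makes
the intersection of the play empty. The proof builds levels of disjoint answers whose unions
are dense in `G n₀`, and follows the point of a residual set through them. -/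
theorem exists_play_of_baireSpace [BaireSpace X]
    (hR : ∀ n H, IsOpen H → H.Nonempty → H ⊆ G n → ∃ n', R n n' ∧ (G n').Nonempty ∧ G n' ⊆ H)
    (hG : ∀ n, IsOpen (G n)) {n₀ : N} (hn₀ : (G n₀).Nonempty) :
    ∃ (u : ℕ → N) (x : X), u 0 = n₀ ∧ (∀ k, R (u k) (u (k + 1))) ∧ ∀ k, x ∈ G (u k) := by
  classical
  set W := G n₀
  choose! next hnext using fun (A : Set N) (hA : W ⊆ closure (⋃ n ∈ A, G n)) =>
    exists_pairwiseDisjoint_responses hR hG hA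
  set L : ℕ → Set N := fun k => next^[k] {n₀}
  have hL_succ : ∀ k, L (k + 1) = next (L k) := fun k => iterate_succ_apply' next k _
  have hLdense : ∀ k, W ⊆ closure (⋃ n ∈ L k, G n) := by
    intro k
    induction k with
    | zero => simpa [L] using subset_closure
    | succ k ih => rw [hL_succ]; exact (hnext _ ih).2.1
  have hLdisj : ∀ k, (L k).PairwiseDisjoint G := by
    rintro (_ | k)
    · exact pairwiseDisjoint_singleton _ _
    · rw [hL_succ]; exact (hnext _ (hLdense k)).1
  set O : ℕ → Set X := fun k => (⋃ n ∈ L k, G n) ∪ (closure W)ᶜ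
  have hOdense : ∀ k, Dense (O k) := fun k x => by
    by_cases hx : x ∈ closure W
    · exact closure_mono subset_union_left
        (closure_minimal (hLdense k) isClosed_closure hx)
    · exact subset_closure (Or.inr hx)
  obtain ⟨x, hxW, hxO⟩ := (dense_iInter_of_isOpen
    (fun k => (isOpen_biUnion fun n _ => hG n).union isClosed_closure.isOpen_compl)
    hOdense).inter_open_nonempty W (hG n₀) hn₀
  have hxL : ∀ k, ∃ n ∈ L k, x ∈ G n := fun k => by
    simpa using (mem_iInter.1 hxO k).resolve_right (not_not.2 (subset_closure hxW))
  choose u huL hux using hxL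
  refine ⟨u, x, by simpa [L] using huL 0, fun k => ?_, hux⟩
  obtain ⟨n, hnL, hR', hsub⟩ := (hnext _ (hLdense k)).2.2 (u (k + 1)) (hL_succ k ▸ huL (k + 1))
  rwa [(hLdisj k).elim_set hnL (huL k) x (hsub (hux (k + 1))) (hux k)] at hR'

end BanachMazur

section Coordinates

variable {T : Type*}

theorem mem_closure_iff_forall_finset_abs_sub_lt {A : Set (T → ℝ)} {w : T → ℝ} :
    w ∈ closure A ↔ ∀ (F : Finset T) (γ : ℝ), 0 < γ → ∃ a ∈ A, ∀ t ∈ F, |a t - w t| < γ := by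
  refine ⟨fun hw F γ hγ => ?_, fun h => mem_closure_iff_nhds.2 fun O hO => ?_⟩
  · have hopen : IsOpen {z : T → ℝ | ∀ t ∈ F, |z t - w t| < γ} := by
      simp only [ofPred_forall]
      exact isOpen_biInter_finset fun t _ => isOpen_lt (by fun_prop) continuous_const
    obtain ⟨a, ha, haA⟩ := mem_closure_iff.1 hw _ hopen (by simp [hγ])
    exact ⟨a, haA, ha⟩
  · rw [nhds_pi, Filter.mem_pi'] at hO
    obtain ⟨I, u, hu, hIu⟩ := hO
    have hball : ∀ᶠ γ in 𝓝[>] (0 : ℝ), 0 < γ ∧ ∀ t ∈ I, Metric.ball (w t) γ ⊆ u t :=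
      eventually_mem_nhdsWithin.and <| (eventually_all_finset I).2 fun t _ => by
        obtain ⟨ε, hε, hεu⟩ := Metric.mem_nhds_iff.1 (hu t)
        exact eventually_of_mem (Ioo_mem_nhdsGT hε) fun γ hγ =>
          (Metric.ball_subset_ball hγ.2.le).trans hεu
    obtain ⟨γ, hγ, hγu⟩ := hball.exists
    obtain ⟨a, haA, ha⟩ := h I γ hγ
    exact ⟨a, hIu fun t ht => hγu t ht (by simpa [Real.dist_eq] using ha t ht), haA⟩

variable {Y : Set (T → ℝ)}

@[fun_prop]
theorem continuous_coord (t : T) : Continuous fun z : Y => z.1 t :=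
  (continuous_apply t).comp continuous_subtype_val

theorem continuous_coord_sub (t : T) : Continuous fun q : Y × Y => q.1.1 t - q.2.1 t :=
  ((continuous_coord t).comp continuous_fst).sub ((continuous_coord t).comp continuous_snd)

theorem isOpen_setOf_forall_abs_sub_lt (F : Finset T) (w : T → ℝ) (η : ℝ) :
    IsOpen {z : Y | ∀ t ∈ F, |z.1 t - w t| < η} := by
  simp only [ofPred_forall]
  exact isOpen_biInter_finset fun t _ => isOpen_lt (by fun_prop) continuous_const

/-- The pairs on which `g` differs by at least `δ` form a compact set, covered by the
increasing open sets of pairs differing by more than `1 / (n + 1)` at some coordinate in `F`. -/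
theorem IsCompact.exists_finset_abs_sub_lt {K : Set Y} (hK : IsCompact K) {g : Y → ℝ}
    (hg : Continuous g) {δ : ℝ} (hδ : 0 < δ) :
    ∃ (F : Finset T) (η : ℝ), 0 < η ∧ ∀ z ∈ K, ∀ z' ∈ K,
      (∀ t ∈ F, |z.1 t - z'.1 t| < η) → |g z - g z'| < δ := by
  classical
  set C := (K ×ˢ K) ∩ {p : Y × Y | δ ≤ |g p.1 - g p.2|}
  have hC : IsCompact C := (hK.prod hK).inter_right (isClosed_le continuous_const (by fun_prop))
  set U : Finset T × ℕ → Set (Y × Y) := fun q =>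
    ⋃ t ∈ q.1, {p | 1 / (q.2 + 1 : ℝ) < |p.1.1 t - p.2.1 t|}
  have hUo : ∀ q, IsOpen (U q) := fun q =>
    isOpen_biUnion fun t _ => isOpen_lt continuous_const (continuous_coord_sub t).abs
  have hCU : C ⊆ ⋃ q, U q := by
    rintro ⟨z, z'⟩ ⟨-, hzz'⟩
    obtain ⟨t, ht⟩ : ∃ t, z.1 t ≠ z'.1 t := by
      by_contra! h
      obtain rfl : z = z' := Subtype.ext (funext h)
      simp only [mem_ofPred_eq, sub_self, abs_zero] at hzz'
      linarith
    obtain ⟨n, hn⟩ := exists_nat_one_div_lt (abs_pos.2 (sub_ne_zero.2 ht))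
    exact mem_iUnion.2 ⟨({t}, n), by simpa [U] using hn⟩
  have hUmono : Monotone U := fun q q' hq =>
    biUnion_mono hq.1 fun t _ p (hp : 1 / (q.2 + 1 : ℝ) < _) =>
      (Nat.one_div_le_one_div hq.2).trans_lt hp
  obtain ⟨⟨F, n⟩, hFn⟩ := hC.elim_directed_cover U hUo hCU hUmono.directed_le
  refine ⟨F, 1 / (n + 1), Nat.one_div_pos_of_nat, fun z hz z' hz' hzz' => ?_⟩
  by_contra! h
  obtain ⟨t, ht, hlt⟩ := mem_iUnion₂.1 (@hFn (z, z') ⟨⟨hz, hz'⟩, h⟩)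
  exact (hzz' t ht).not_gt hlt

theorem IsCompact.exists_finite_net {K D : Set Y} (hK : IsCompact K) (hKD : K ⊆ closure D)
    (F : Finset T) {η : ℝ} (hη : 0 < η) :
    ∃ D' ⊆ D, D'.Finite ∧ ∀ z ∈ K, ∃ d ∈ D', ∀ t ∈ F, |z.1 t - d.1 t| < η := by
  have hcover : K ⊆ ⋃ d ∈ D, {z : Y | ∀ t ∈ F, |z.1 t - d.1 t| < η} := fun z hz => by
    obtain ⟨d, hd, hdD⟩ :=
      mem_closure_iff.1 (hKD hz) _ (isOpen_setOf_forall_abs_sub_lt F z η) (by simp [hη])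
    exact mem_biUnion hdD fun t ht => abs_sub_comm (d.1 t) _ ▸ hd t ht
  obtain ⟨D', hD'D, hD'fin, hD'⟩ := hK.elim_finite_subcover_image
    (fun (d : Y) _ => isOpen_setOf_forall_abs_sub_lt F d.1 η) hcover
  exact ⟨D', hD'D, hD'fin, fun z hz => by simpa using hD' hz⟩

/-- A cluster point of `(b j, d j)` lies on the diagonal. -/
theorem IsCompact.exists_abs_sub_lt_of_tendsto {K : Set Y} (hK : IsCompact K) {b d : ℕ → Y}
    (hb : ∀ j, b j ∈ K) (hd : ∀ j, d j ∈ K)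
    (hbd : ∀ t, Tendsto (fun j => (b j).1 t - (d j).1 t) atTop (𝓝 0))
    {g : Y → ℝ} (hg : Continuous g) {c : ℝ} (hc : 0 < c) : ∃ j, |g (b j) - g (d j)| < c := by
  obtain ⟨p, -, hp⟩ := (hK.prod hK).exists_mapClusterPt (f := atTop)
    (u := fun j => (b j, d j)) (tendsto_principal.2 (Eventually.of_forall fun j => ⟨hb j, hd j⟩))
  have hdiag : p.1 = p.2 := Subtype.ext <| funext fun t => sub_eq_zero.1 <| eq_of_nhds_neBot <|
    (ClusterPt.mono (hp.tendsto_comp ((continuous_coord_sub t).tendsto p)) (hbd t)).neBot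
  have hψ : ∀ᶠ q in 𝓝 p, |g q.1 - g q.2| < c := by
    have : Continuous fun q : Y × Y => |g q.1 - g q.2| := by fun_prop
    exact this.continuousAt.eventually_lt continuousAt_const (by simpa [hdiag] using hc)
  exact (hp.frequently hψ).exists

end Coordinates

section RichSets

variable {T : Type*} {Y : Set (T → ℝ)}

def supportedIn (Y : Set (T → ℝ)) (S : Set T) : Set Y := {z | support z.1 ⊆ S}

theorem supportedIn_mono {S S' : Set T} (h : S ⊆ S') : supportedIn Y S ⊆ supportedIn Y S' :=
  fun _ hz => hz.trans h

theorem isCompact_supportedIn (hY : IsCompact Y) (S : Set T) :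
    IsCompact (supportedIn Y S) := by
  have := isCompact_iff_compactSpace.1 hY
  refine IsClosed.isCompact ?_
  simp only [supportedIn, support_subset_iff', ofPred_forall]
  exact isClosed_iInter fun t => isClosed_iInter fun _ =>
    isClosed_eq (continuous_coord t) continuous_const

structure IsRich (Y : Set (T → ℝ)) (B : Set Y) (S : Set T) : Prop where
  countable : S.Countable
  indicator_mem : ∀ y ∈ Y, S.indicator y ∈ Y
  subset_closure : supportedIn Y S ⊆ closure (B ∩ supportedIn Y S)

namespace IsRich

variable {B : Set Y} {S : Set T}

noncomputable def retract (hS : IsRich Y B S) (y : Y) : Y :=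
  ⟨S.indicator y, hS.indicator_mem y y.2⟩

theorem continuous_retract (hS : IsRich Y B S) : Continuous hS.retract :=
  continuous_induced_rng.2 <| continuous_pi fun t => by
    by_cases ht : t ∈ S
    · simpa [retract, ht] using continuous_coord t
    · simpa [retract, ht] using continuous_const

theorem retract_mem (hS : IsRich Y B S) (y : Y) : hS.retract y ∈ supportedIn Y S :=
  support_indicator_subset

theorem retract_apply_of_mem (hS : IsRich Y B S) (y : Y) {t : T} (ht : t ∈ S) :
    (hS.retract y).1 t = y.1 t :=
  indicator_of_mem ht _

end IsRich

/-- `ℝ^S` is second countable, so the image of `B` there has a countable dense subset. -/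
theorem exists_countable_subset_approx {B : Set Y} (hB : Dense B) {S : Set T}
    (hS : S.Countable) : ∃ D ⊆ B, D.Countable ∧ ∀ (y : Y) (F : Finset T), ↑F ⊆ S →
      ∀ γ : ℝ, 0 < γ → ∃ d ∈ D, ∀ t ∈ F, |d.1 t - y.1 t| < γ := by
  classical
  have := hS.to_subtype
  set π : Y → (S → ℝ) := fun y t => y.1 t
  have hπ : Continuous π := continuous_pi fun t => continuous_coord (t : T)
  obtain ⟨c, hcB, hc, hBc⟩ :=
    (TopologicalSpace.IsSeparable.of_separableSpace (π '' B)).exists_countable_dense_subset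
  rcases isEmpty_or_nonempty Y with hY | hY
  · exact ⟨∅, empty_subset _, countable_empty, fun y => isEmptyElim y⟩
  refine ⟨invFunOn π B '' c, ?_, hc.image _, fun y F hF γ hγ => ?_⟩
  · rintro _ ⟨w, hw, rfl⟩
    exact invFunOn_mem (hcB hw)
  have hy : π y ∈ closure c :=
    closure_minimal hBc isClosed_closure (map_mem_closure hπ (hB y) fun _ => mem_image_of_mem π)
  obtain ⟨w, hwc, hw⟩ :=
    mem_closure_iff_forall_finset_abs_sub_lt.1 hy (F.subtype (· ∈ S)) γ hγ
  refine ⟨invFunOn π B w, mem_image_of_mem _ hwc, fun t ht => ?_⟩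
  have := hw ⟨t, hF ht⟩ (by simpa using ht)
  rwa [← invFunOn_eq (hcB hwc)] at this

theorem indicator_iUnion_mem_closure {Sn : ℕ → Set T} (hSn : Monotone Sn) {D : ℕ → Set Y}
    (hD : ∀ n (y : Y) (F : Finset T), ↑F ⊆ Sn n → ∀ γ : ℝ, 0 < γ →
      ∃ d ∈ D n, ∀ t ∈ F, |d.1 t - y.1 t| < γ)
    (hDsupp : ∀ n, D n ⊆ supportedIn Y (⋃ n, Sn n)) (y : Y) :
    (⋃ n, Sn n).indicator y.1 ∈ closure (Subtype.val '' ⋃ n, D n) := by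
  classical
  refine mem_closure_iff_forall_finset_abs_sub_lt.2 fun F γ hγ => ?_
  set S := ⋃ n, Sn n
  obtain ⟨n, hn⟩ := hSn.directed_le.exists_mem_subset_of_finset_subset_biUnion
    (s := F.filter (· ∈ S)) fun t ht => (Finset.mem_filter.1 ht).2
  obtain ⟨d, hdn, hd⟩ := hD n y _ hn γ hγ
  refine ⟨d.1, mem_image_of_mem _ (mem_iUnion.2 ⟨n, hdn⟩), fun t ht => ?_⟩
  by_cases htS : t ∈ S
  · rw [indicator_of_mem htS]
    exact hd t (Finset.mem_filter.2 ⟨ht, htS⟩)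
  · rw [indicator_of_notMem htS, notMem_support.1 fun h => htS (hDsupp n hdn h)]
    simpa using hγ

/-- Add to `S₀` the supports of countably many points of `B` approximating `Y` on the
coordinates of `S₀`, and iterate. -/
theorem exists_isRich_superset (hY : IsClosed Y) {B : Set Y} (hB : Dense B)
    (hBsupp : ∀ b ∈ B, (support b.1).Countable) {S₀ : Set T} (hS₀ : S₀.Countable) :
    ∃ S, S₀ ⊆ S ∧ IsRich Y B S := by
  classical
  choose D hDB hDc hD using fun S : Set T => show ∃ D ⊆ B, D.Countable ∧ (S.Countable →
      ∀ (y : Y) (F : Finset T), ↑F ⊆ S → ∀ γ : ℝ, 0 < γ → ∃ d ∈ D, ∀ t ∈ F, |d.1 t - y.1 t| < γ)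
    from if h : S.Countable then
      (exists_countable_subset_approx hB h).imp fun D ⟨hDB, hDc, hD⟩ => ⟨hDB, hDc, fun _ => hD⟩
    else ⟨∅, empty_subset _, countable_empty, fun h' => absurd h' h⟩
  set Sn : ℕ → Set T := fun n => Nat.rec S₀ (fun _ S => S ∪ ⋃ d ∈ D S, support d.1) n
  have hSn_succ : ∀ n, Sn (n + 1) = Sn n ∪ ⋃ d ∈ D (Sn n), support d.1 := fun n => rfl
  have hSnc : ∀ n, (Sn n).Countable := by
    intro n
    induction n with
    | zero => exact hS₀
    | succ n ih =>
      rw [hSn_succ]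
      exact ih.union ((hDc _).biUnion fun d hd => hBsupp d (hDB _ hd))
  have hSnmono : Monotone Sn :=
    monotone_nat_of_le_succ fun n => (hSn_succ n).symm ▸ subset_union_left
  have hDsupp : ∀ n, D (Sn n) ⊆ supportedIn Y (⋃ n, Sn n) := fun n d hd t ht =>
    mem_iUnion.2 ⟨n + 1, (hSn_succ n).symm ▸ Or.inr (mem_biUnion hd ht)⟩
  have hclosure := indicator_iUnion_mem_closure hSnmono (fun n => hD (Sn n) (hSnc n)) hDsupp
  have hDB' : ⋃ n, D (Sn n) ⊆ B ∩ supportedIn Y (⋃ n, Sn n) :=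
    iUnion_subset fun n d hd => ⟨hDB _ hd, hDsupp n hd⟩
  refine ⟨⋃ n, Sn n, subset_iUnion Sn 0, countable_iUnion hSnc,
    fun y hy => closure_minimal (image_subset_iff.2 fun d _ => d.2) hY (hclosure ⟨y, hy⟩),
    fun z hz => closure_mono hDB' (closure_subtype.2 ?_)⟩
  simpa [indicator_eq_self.2 hz] using hclosure z

end RichSets

def SectionsOscLE {X Y : Type*} (f : X × Y → ℝ) (K : Set Y) (G : Set X) (ε : ℝ) : Prop :=
  ∀ x ∈ G, ∀ x' ∈ G, ∀ y ∈ K, |f (x, y) - f (x', y)| ≤ ε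

section Oscillation

variable {X T : Type*} [TopologicalSpace X] {Y : Set (T → ℝ)} {f : X × Y → ℝ}

/-- Baire category over the countably many finite-coordinate moduli of uniform continuity of
the sections `f (x, ·)` on `K`. -/
theorem exists_isOpen_subset_closure_modulus [BaireSpace X]
    (hf2 : ∀ x, Continuous fun y : Y => f (x, y))
    {K : Set Y} (hK : IsCompact K) {S : Set T} (hS : S.Countable) (hKS : K ⊆ supportedIn Y S)
    {H : Set X} (hH : IsOpen H) (hHne : H.Nonempty) {δ : ℝ} (hδ : 0 < δ) :
    ∃ (F : Finset T) (η : ℝ), 0 < η ∧ ∃ V, IsOpen V ∧ V.Nonempty ∧ V ⊆ H ∧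
      V ⊆ closure {x | ∀ z ∈ K, ∀ z' ∈ K,
        (∀ t ∈ F, |z.1 t - z'.1 t| < η) → |f (x, z) - f (x, z')| < δ} := by
  classical
  have : Countable {F : Finset T // ↑F ⊆ S} :=
    have := (countable_ofPred_finite_subset hS).to_subtype
    Injective.countable (f := fun F => (⟨F.1, F.1.finite_toSet, F.2⟩ :
      {s : Set T | s.Finite ∧ s ⊆ S})) fun F F' h =>
        Subtype.ext (Finset.coe_injective (congrArg Subtype.val h))
  set E : {F : Finset T // ↑F ⊆ S} × ℕ → Set X := fun p => {x | ∀ z ∈ K, ∀ z' ∈ K,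
    (∀ t ∈ p.1.1, |z.1 t - z'.1 t| < 1 / (p.2 + 1)) → |f (x, z) - f (x, z')| < δ}
  have hE : ⋃ p, E p = univ := iUnion_eq_univ_iff.2 fun x => by
    obtain ⟨F, η, hη, hF⟩ := hK.exists_finset_abs_sub_lt (hf2 x) hδ
    obtain ⟨n, hn⟩ := exists_nat_one_div_lt hη
    refine ⟨(⟨F.filter (· ∈ S), fun t ht => (Finset.mem_filter.1 ht).2⟩, n),
      fun z hz z' hz' hzz' => hF z hz z' hz' fun t ht => ?_⟩
    by_cases htS : t ∈ S
    · exact (hzz' t (Finset.mem_filter.2 ⟨ht, htS⟩)).trans hn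
    · rw [notMem_support.1 fun h => htS (hKS hz h), notMem_support.1 fun h => htS (hKS hz' h)]
      simpa using hη
  obtain ⟨⟨⟨F, _⟩, n⟩, V, hVo, hVne, hVH, hVE⟩ :=
    exists_isOpen_subset_closure_of_iUnion_eq_univ hE hH hHne
  exact ⟨F, 1 / (n + 1), Nat.one_div_pos_of_nat, V, hVo, hVne, hVH, hVE⟩

/-- `f (x, z)` is compared with `f (x, di)` through a point `d'` of `B` near `z` and a point
`x''` near `x` at which the modulus applies. -/
theorem abs_sub_lt_of_modulus (hf2 : ∀ x, Continuous fun y : Y => f (x, y)) {B : Set Y}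
    (hBqc : ∀ b ∈ B, QuasiContinuous fun x => f (x, b)) {K : Set Y} {F : Finset T} {η δ : ℝ}
    (hδ : 0 < δ) {G : Set X} (hG : IsOpen G)
    (hGE : G ⊆ closure {x | ∀ z ∈ K, ∀ z' ∈ K,
      (∀ t ∈ F, |z.1 t - z'.1 t| < η) → |f (x, z) - f (x, z')| < δ})
    {z di : Y} (hz : z ∈ closure (B ∩ K)) (hdi : di ∈ K)
    (hzdi : ∀ t ∈ F, |z.1 t - di.1 t| < η / 2)
    (hdiG : ∀ x ∈ G, ∀ x' ∈ G, |f (x, di) - f (x', di)| < δ) {x : X} (hx : x ∈ G) :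
    |f (x, z) - f (x, di)| < 4 * δ := by
  obtain ⟨d', ⟨hd'f, hd'F⟩, hd'B, hd'K⟩ := mem_closure_iff.1 hz
    ({z' | |f (x, z') - f (x, z)| < δ} ∩ {z' | ∀ t ∈ F, |z'.1 t - z.1 t| < η / 2})
    ((isOpen_lt ((hf2 x).sub continuous_const).abs continuous_const).inter
      (isOpen_setOf_forall_abs_sub_lt F z.1 _))
    ⟨by simpa using hδ, fun t ht => by simpa using (abs_nonneg _).trans_lt (hzdi t ht)⟩
  obtain ⟨O, hOo, ⟨o, ho⟩, hOG, hO⟩ :=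
    (hBqc d' hd'B x).exists_isOpen_abs_sub_lt (hG.mem_nhds hx) hδ
  obtain ⟨x'', hx''O, hx''E⟩ := mem_closure_iff.1 (hGE (hOG ho)) O hOo ho
  have h₁ : |f (x'', d') - f (x'', di)| < δ := hx''E d' hd'K di hdi fun t ht => by
    have := abs_sub_lt_iff.1 (hd'F t ht)
    have := abs_sub_lt_iff.1 (hzdi t ht)
    exact abs_sub_lt_iff.2 ⟨by linarith, by linarith⟩
  have h₂ := abs_sub_lt_iff.1 (hdiG x'' (hOG hx''O) x hx)
  have h₃ := abs_sub_lt_iff.1 (hO x'' hx''O)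
  have h₄ := abs_sub_lt_iff.1 (show |f (x, d') - f (x, z)| < δ from hd'f)
  have h₁ := abs_sub_lt_iff.1 h₁
  exact abs_sub_lt_iff.2 ⟨by linarith, by linarith⟩

theorem exists_sectionsOscLE_supportedIn [BaireSpace X] (hYcomp : IsCompact Y)
    (hf2 : ∀ x, Continuous fun y : Y => f (x, y)) {B : Set Y}
    (hBqc : ∀ b ∈ B, QuasiContinuous fun x => f (x, b)) {S : Set T} (hS : S.Countable)
    (hSB : supportedIn Y S ⊆ closure (B ∩ supportedIn Y S)) {H : Set X} (hH : IsOpen H)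
    (hHne : H.Nonempty) {ε : ℝ} (hε : 0 < ε) :
    ∃ G, IsOpen G ∧ G.Nonempty ∧ G ⊆ H ∧ SectionsOscLE f (supportedIn Y S) G ε := by
  have hK : IsCompact (supportedIn Y S) := isCompact_supportedIn hYcomp S
  obtain ⟨F, η, hη, V, hVo, hVne, hVH, hVE⟩ := exists_isOpen_subset_closure_modulus hf2 hK hS
    subset_rfl hH hHne (δ := ε / 9) (by positivity)
  obtain ⟨D', hD'D, hD'fin, hD'net⟩ := hK.exists_finite_net hSB F (half_pos hη)
  obtain ⟨G, hGo, hGne, hGV, hGosc⟩ := exists_isOpen_forall_abs_sub_lt_of_quasiContinuous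
    hD'fin.toFinset (g := fun d x => f (x, d))
    (fun d hd => hBqc d (hD'D (hD'fin.mem_toFinset.1 hd)).1) hVo hVne (γ := ε / 9)
    (by positivity)
  refine ⟨G, hGo, hGne, hGV.trans hVH, fun x hx x' hx' z hz => ?_⟩
  obtain ⟨di, hdi, hzdi⟩ := hD'net z hz
  have hdiG := hGosc di (hD'fin.mem_toFinset.2 hdi)
  have h₁ := abs_sub_lt_iff.1 (abs_sub_lt_of_modulus hf2 hBqc (by positivity) hGo
    (hGV.trans hVE) (hSB hz) (hD'D hdi).2 hzdi hdiG hx)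
  have h₂ := abs_sub_lt_iff.1 (abs_sub_lt_of_modulus hf2 hBqc (by positivity) hGo
    (hGV.trans hVE) (hSB hz) (hD'D hdi).2 hzdi hdiG hx')
  have h₃ := abs_sub_lt_iff.1 (hdiG x hx x' hx')
  exact abs_sub_le_iff.2 ⟨by linarith, by linarith⟩

end Oscillation

section Separation

variable {X T : Type*} [TopologicalSpace X] [BaireSpace X] {Y : Set (T → ℝ)} {f : X × Y → ℝ}
  {B : Set Y}

/-- A gap `δ < |f (x₀, b) - f (x₀, 1_S · b)|` persists, up to `3δ/8`, on an open set `P`: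
quasi-continuity of `f (·, b)` controls `b`, and a uniform oscillation bound over the points
supported in `S` controls a point `d ∈ B` close to `1_S · b`. -/
theorem exists_separated_pair (hYcomp : IsCompact Y)
    (hf2 : ∀ x, Continuous fun y : Y => f (x, y)) (hBdense : Dense B)
    (hBqc : ∀ b ∈ B, QuasiContinuous fun x => f (x, b)) {S : Set T} (hS : IsRich Y B S)
    {H : Set X} (hH : IsOpen H) (hHne : H.Nonempty) {δ : ℝ} (hδ : 0 < δ)
    (hfail : ∀ G, IsOpen G → G.Nonempty → G ⊆ H →
      ∃ x ∈ G, ∃ y, δ < |f (x, y) - f (x, hS.retract y)|)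
    (F : Finset T) {η : ℝ} (hη : 0 < η) :
    ∃ b ∈ B, ∃ d ∈ B ∩ supportedIn Y S, ∃ P, IsOpen P ∧ P.Nonempty ∧ P ⊆ H ∧
      (∀ x ∈ P, δ / 2 ≤ |f (x, b) - f (x, d)|) ∧ ∀ t ∈ F, t ∈ S → |b.1 t - d.1 t| < η := by
  obtain ⟨H', hH'o, hH'ne, hH'H, hosc⟩ := exists_sectionsOscLE_supportedIn hYcomp hf2 hBqc
    hS.countable hS.subset_closure hH hHne (ε := δ / 8) (by positivity)
  obtain ⟨x₀, hx₀, y₀, hy₀⟩ := hfail H' hH'o hH'ne hH'H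
  obtain ⟨b, hbB, hb⟩ := hBdense.exists_mem_open (isOpen_lt continuous_const
    ((hf2 x₀).sub ((hf2 x₀).comp hS.continuous_retract)).abs) ⟨y₀, hy₀⟩
  set w := hS.retract b
  obtain ⟨d, ⟨hdf, hdF⟩, hdB⟩ := mem_closure_iff.1 (hS.subset_closure (hS.retract_mem b))
    ({z | |f (x₀, z) - f (x₀, w)| < δ / 8} ∩ {z | ∀ t ∈ F, |z.1 t - w.1 t| < η})
    ((isOpen_lt ((hf2 x₀).sub continuous_const).abs continuous_const).inter
      (isOpen_setOf_forall_abs_sub_lt F w.1 η))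
    ⟨show |f (x₀, w) - f (x₀, w)| < δ / 8 by simpa using hδ,
      fun t _ => show |w.1 t - w.1 t| < η by simpa using hη⟩
  obtain ⟨P, hPo, hPne, hPH', hP⟩ :=
    (hBqc b hbB x₀).exists_isOpen_abs_sub_lt (hH'o.mem_nhds hx₀) (γ := δ / 8) (by positivity)
  refine ⟨b, hbB, d, hdB, P, hPo, hPne, hPH'.trans hH'H, fun x hx => ?_, fun t ht htS => ?_⟩
  · have h₀ : δ < |f (x₀, b) - f (x₀, w)| := hb
    have h₁ := hP x hx
    have h₂ := hosc x (hPH' hx) x₀ hx₀ d hdB.2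
    have h₃ : |f (x₀, d) - f (x₀, w)| < δ / 8 := hdf
    have h₄ := abs_sub_le (f (x₀, b)) (f (x, b)) (f (x₀, w))
    have h₅ := abs_sub_le (f (x, b)) (f (x, d)) (f (x₀, w))
    have h₆ := abs_sub_le (f (x, d)) (f (x₀, d)) (f (x₀, w))
    rw [abs_sub_comm] at h₁
    linarith
  · rw [abs_sub_comm, ← hS.retract_apply_of_mem b htS]
    exact hdF t ht

end Separation

theorem exists_option_enum {T : Type*} {S : Set T} (hS : S.Countable) :
    ∃ e : ℕ → Option T, {t | ∃ i, e i = some t} = S := by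
  rcases S.eq_empty_or_nonempty with rfl | hne
  · exact ⟨fun _ => none, by simp⟩
  · obtain ⟨g, rfl⟩ := hS.exists_eq_range hne
    exact ⟨fun i => some (g i), by ext; simp [eq_comm]⟩

/-- A position of the game after `stage` moves: `enum j` enumerates the countable set of
coordinates chosen at move `j`, `G` is the current open set and `pair` the pair of points
separated on `G` by the last move. -/
structure Position (X T : Type*) (Y : Set (T → ℝ)) where
  G : Set X
  stage : ℕ
  enum : ℕ → ℕ → Option T
  pair : Y × Y

namespace Position

variable {X T : Type*} {Y : Set (T → ℝ)}

def coords (p : Position X T Y) : Set T := {t | ∃ i, p.enum p.stage i = some t}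

open Classical in
/-- The first `stage + 1` coordinates of each of the first `stage + 1` enumerations; along a
play every chosen coordinate eventually stays due. -/
noncomputable def due (p : Position X T Y) : Finset T :=
  (Finset.range (p.stage + 1) ×ˢ Finset.range (p.stage + 1)).biUnion
    fun ji => (p.enum ji.1 ji.2).toFinset

def IsValid [TopologicalSpace X] (B : Set Y) (W : Set X) (p : Position X T Y) : Prop :=
  IsOpen p.G ∧ p.G ⊆ W ∧ IsRich Y B p.coords

structure IsMove (f : X × Y → ℝ) (c : ℝ) (p q : Position X T Y) : Prop where
  stage_succ : q.stage = p.stage + 1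
  enum_eq : ∀ j ≤ p.stage, q.enum j = p.enum j
  coords_subset : p.coords ⊆ q.coords
  separated : ∀ x ∈ q.G, c ≤ |f (x, q.pair.1) - f (x, q.pair.2)|
  pair_mem : q.pair.1 ∈ supportedIn Y q.coords ∧ q.pair.2 ∈ supportedIn Y q.coords
  close : ∀ t ∈ p.due, t ∈ p.coords → |q.pair.1.1 t - q.pair.2.1 t| < (1 / 2) ^ p.stage

section Play

variable {f : X × Y → ℝ} {c : ℝ} {u : ℕ → Position X T Y}

theorem stage_eq_of_isMove (h0 : (u 0).stage = 0) (hu : ∀ k, IsMove f c (u k) (u (k + 1)))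
    (k : ℕ) : (u k).stage = k := by
  induction k with
  | zero => exact h0
  | succ k ih => rw [(hu k).stage_succ, ih]

theorem enum_eq_of_isMove (h0 : (u 0).stage = 0) (hu : ∀ k, IsMove f c (u k) (u (k + 1)))
    {j k : ℕ} (hjk : j ≤ k) : (u k).enum j = (u j).enum j := by
  induction k, hjk using Nat.le_induction with
  | base => rfl
  | succ k hjk ih =>
    rw [(hu k).enum_eq j (by rw [stage_eq_of_isMove h0 hu]; exact hjk), ih]

theorem tendsto_pair_sub_of_isMove (h0 : (u 0).stage = 0)
    (hu : ∀ k, IsMove f c (u k) (u (k + 1))) (t : T) :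
    Tendsto (fun k => (u (k + 1)).pair.1.1 t - (u (k + 1)).pair.2.1 t) atTop (𝓝 0) := by
  have hstage := stage_eq_of_isMove h0 hu
  by_cases ht : ∃ j, t ∈ (u j).coords
  · obtain ⟨j, hj⟩ := ht
    obtain ⟨i, hi⟩ := id hj
    rw [hstage j] at hi
    refine squeeze_zero_norm' (eventually_atTop.2 ⟨max i j, fun k hk => ?_⟩)
      (tendsto_pow_atTop_nhds_zero_of_lt_one (by norm_num) (by norm_num : (1 / 2 : ℝ) < 1))
    have hdue : t ∈ (u k).due := by
      simp only [due, hstage k, Finset.mem_biUnion, Finset.mem_product, Finset.mem_range,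
        Option.mem_toFinset, Option.mem_def]
      exact ⟨(j, i), ⟨by omega, by omega⟩,
        enum_eq_of_isMove (j := j) (k := k) h0 hu (by omega) ▸ hi⟩
    have hcoords : t ∈ (u k).coords :=
      monotone_nat_of_le_succ (fun k => (hu k).coords_subset) (le_of_max_le_right hk) hj
    simpa [hstage k] using ((hu k).close t hdue hcoords).le
  · simp only [not_exists] at ht
    have hzero : ∀ k, ∀ z ∈ supportedIn Y (u k).coords, z.1 t = 0 := fun k z hz =>
      notMem_support.1 fun h => ht k (hz h)
    simp only [hzero _ _ (hu _).pair_mem.1, hzero _ _ (hu _).pair_mem.2, sub_self,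
      tendsto_const_nhds]

/-- No play has a point common to all its open sets: at such a point the separated pairs
would have a common limit along a subnet, against the continuity of the section there. -/
theorem false_of_isMove (hYcomp : IsCompact Y) (hf2 : ∀ x, Continuous fun y : Y => f (x, y))
    (hc : 0 < c) (h0 : (u 0).stage = 0) (hu : ∀ k, IsMove f c (u k) (u (k + 1))) {x : X}
    (hx : ∀ k, x ∈ (u k).G) : False := by
  set S := ⋃ k, (u k).coords
  have hS : ∀ k, supportedIn Y (u (k + 1)).coords ⊆ supportedIn Y S := fun k =>
    supportedIn_mono (subset_iUnion (fun k => (u k).coords) (k + 1))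
  obtain ⟨k, hk⟩ := (isCompact_supportedIn hYcomp S).exists_abs_sub_lt_of_tendsto
    (fun k => hS k (hu k).pair_mem.1) (fun k => hS k (hu k).pair_mem.2)
    (tendsto_pair_sub_of_isMove h0 hu) (hf2 x) hc
  exact hk.not_ge ((hu k).separated x (hx (k + 1)))

end Play

variable [TopologicalSpace X] [BaireSpace X] {f : X × Y → ℝ} {B : Set Y}

theorem exists_isMove (hYcomp : IsCompact Y) (hf2 : ∀ x, Continuous fun y : Y => f (x, y))
    (hBdense : Dense B) (hBsupp : ∀ b ∈ B, (support b.1).Countable)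
    (hBqc : ∀ b ∈ B, QuasiContinuous fun x => f (x, b)) {W : Set X} {δ : ℝ} (hδ : 0 < δ)
    (hfail : ∀ S (hS : IsRich Y B S) G, IsOpen G → G.Nonempty → G ⊆ W →
      ∃ x ∈ G, ∃ y, δ < |f (x, y) - f (x, hS.retract y)|)
    {p : Position X T Y} (hp : p.IsValid B W) {H : Set X} (hH : IsOpen H)
    (hHne : H.Nonempty) (hHp : H ⊆ p.G) :
    ∃ q : Position X T Y, q.IsValid B W ∧ IsMove f (δ / 2) p q ∧ q.G.Nonempty ∧ q.G ⊆ H := by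
  obtain ⟨-, hpW, hp⟩ := hp
  obtain ⟨b, hbB, d, hdB, P, hPo, hPne, hPH, hsep, hclose⟩ :=
    exists_separated_pair hYcomp hf2 hBdense hBqc hp hH hHne hδ
      (fun G hG hGne hGH => hfail _ hp G hG hGne (hGH.trans (hHp.trans hpW)))
      p.due (η := (1 / 2) ^ p.stage) (by positivity)
  obtain ⟨S', hS'sub, hS'⟩ := exists_isRich_superset hYcomp.isClosed hBdense hBsupp
    (hp.countable.union (hBsupp b hbB))
  obtain ⟨e, he⟩ := exists_option_enum hS'.countable
  let q : Position X T Y := ⟨P, p.stage + 1, update p.enum (p.stage + 1) e, (b, d)⟩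
  have hq : q.coords = S' := by simpa [q, coords] using he
  refine ⟨q, ⟨hPo, hPH.trans (hHp.trans hpW), hq ▸ hS'⟩, ?_, hPne, hPH⟩
  exact
    { stage_succ := rfl
      enum_eq := fun j hj => update_of_ne (by omega) _ _
      coords_subset := hq ▸ subset_union_left.trans hS'sub
      separated := hsep
      pair_mem := hq ▸ ⟨fun t ht => hS'sub (Or.inr ht),
        supportedIn_mono (subset_union_left.trans hS'sub) hdB.2⟩
      close := hclose }

end Position

section Truncation

variable {X T : Type*} [TopologicalSpace X] [BaireSpace X] {Y : Set (T → ℝ)} {f : X × Y → ℝ}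
  {B : Set Y}

open Position in
/-- Otherwise `Position.exists_isMove` would give a strategy refuting
`exists_play_of_baireSpace`. -/
theorem exists_isRich_retract_close [Nonempty Y] (hYcomp : IsCompact Y)
    (hf2 : ∀ x, Continuous fun y : Y => f (x, y)) (hBdense : Dense B)
    (hBsupp : ∀ b ∈ B, (support b.1).Countable)
    (hBqc : ∀ b ∈ B, QuasiContinuous fun x => f (x, b)) {W : Set X} (hW : IsOpen W)
    (hWne : W.Nonempty) {δ : ℝ} (hδ : 0 < δ) :
    ∃ S, ∃ hS : IsRich Y B S, ∃ G, IsOpen G ∧ G.Nonempty ∧ G ⊆ W ∧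
      ∀ x ∈ G, ∀ y, |f (x, y) - f (x, hS.retract y)| ≤ δ := by
  by_contra! hfail
  obtain ⟨S₀, -, hS₀⟩ := exists_isRich_superset hYcomp.isClosed hBdense hBsupp countable_empty
  obtain ⟨e₀, he₀⟩ := exists_option_enum hS₀.countable
  let p₀ : Position X T Y := ⟨W, 0, fun _ => e₀, (Classical.arbitrary Y, Classical.arbitrary Y)⟩
  have hp₀ : p₀.coords = S₀ := he₀
  obtain ⟨u, x, hu0, hu, hx⟩ := exists_play_of_baireSpace
    (G := fun p : {p : Position X T Y // p.IsValid B W} => p.1.G)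
    (R := fun p q => IsMove f (δ / 2) p.1 q.1)
    (fun p H hH hHne hHp => by
      obtain ⟨q, hq, hmove, hqne, hqH⟩ :=
        exists_isMove hYcomp hf2 hBdense hBsupp hBqc hδ hfail p.2 hH hHne hHp
      exact ⟨⟨q, hq⟩, hmove, hqne, hqH⟩)
    (fun p => p.2.1) (n₀ := ⟨p₀, hW, subset_rfl, hp₀ ▸ hS₀⟩) hWne
  exact false_of_isMove hYcomp hf2 (half_pos hδ) (u := fun k => (u k).1) (by rw [hu0]) hu hx

theorem exists_sectionsOscLE (hYcomp : IsCompact Y)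
    (hf2 : ∀ x, Continuous fun y : Y => f (x, y)) (hBdense : Dense B)
    (hBsupp : ∀ b ∈ B, (support b.1).Countable)
    (hBqc : ∀ b ∈ B, QuasiContinuous fun x => f (x, b)) {W : Set X} (hW : IsOpen W)
    (hWne : W.Nonempty) {ε : ℝ} (hε : 0 < ε) :
    ∃ G, IsOpen G ∧ G.Nonempty ∧ G ⊆ W ∧ SectionsOscLE f univ G ε := by
  rcases isEmpty_or_nonempty Y with hY | hY
  · exact ⟨W, hW, hWne, subset_rfl, fun _ _ _ _ y => isEmptyElim y⟩
  obtain ⟨S, hS, G₁, hG₁o, hG₁ne, hG₁W, hG₁⟩ := exists_isRich_retract_close hYcomp hf2 hBdense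
    hBsupp hBqc hW hWne (δ := ε / 3) (by positivity)
  obtain ⟨G, hGo, hGne, hGG₁, hG⟩ := exists_sectionsOscLE_supportedIn hYcomp hf2 hBqc
    hS.countable hS.subset_closure hG₁o hG₁ne (ε := ε / 3) (by positivity)
  refine ⟨G, hGo, hGne, hGG₁.trans hG₁W, fun x hx x' hx' y _ => ?_⟩
  have h₁ := abs_le.1 (hG₁ x (hGG₁ hx) y)
  have h₂ := abs_le.1 (hG₁ x' (hGG₁ hx') y)
  have h₃ := abs_le.1 (hG x hx x' hx' _ (hS.retract_mem y))
  exact abs_le.2 ⟨by linarith, by linarith⟩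

end Truncation

theorem namiokaProperty_of_sectionsOscLE {X Y : Type*} [TopologicalSpace X] [BaireSpace X]
    [TopologicalSpace Y] {f : X × Y → ℝ} (hf2 : ∀ x, Continuous fun y => f (x, y))
    (hosc : ∀ W : Set X, IsOpen W → W.Nonempty → ∀ ε : ℝ, 0 < ε →
      ∃ G, IsOpen G ∧ G.Nonempty ∧ G ⊆ W ∧ SectionsOscLE f univ G ε) :
    NamiokaProperty f := by
  set A : ℕ → Set X := fun m => ⋃₀ {U | IsOpen U ∧ SectionsOscLE f univ U (1 / (m + 1))}
  have hAo : ∀ m, IsOpen (A m) := fun m => isOpen_sUnion fun U hU => hU.1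
  have hAd : ∀ m, Dense (A m) := fun m => dense_iff_inter_open.2 fun W hW hWne => by
    obtain ⟨G, hGo, ⟨x, hx⟩, hGW, hG⟩ := hosc W hW hWne _ Nat.one_div_pos_of_nat
    exact ⟨x, hGW hx, G, ⟨hGo, hG⟩, hx⟩
  refine ⟨⋂ m, A m, dense_iInter_of_isOpen hAo hAd, .iInter fun m => (hAo m).isGδ,
    fun x hx y => Metric.tendsto_nhds.2 fun ε hε => ?_⟩
  obtain ⟨m, hm⟩ := exists_nat_one_div_lt (half_pos hε)
  obtain ⟨U, ⟨hUo, hU⟩, hxU⟩ := mem_sUnion.1 (mem_iInter.1 hx m)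
  filter_upwards [prod_mem_nhds (hUo.mem_nhds hxU)
    (Metric.tendsto_nhds.1 (hf2 x).continuousAt _ (half_pos hε))] with p ⟨hp₁, hp₂⟩
  have h₁ := hU p.1 hp₁ x hxU p.2 (mem_univ _)
  have h₂ := abs_sub_le (f p) (f (x, p.2)) (f (x, y))
  change dist _ _ < _ at hp₂
  rw [Real.dist_eq] at hp₂ ⊢
  linarith

theorem namioka_of_dense_sigma_sections_general {X : Type*} [TopologicalSpace X] [BaireSpace X]
    {T : Type*} (Y : Set (T → ℝ))
    (hYcomp : IsCompact Y)
    (f : X × Y → ℝ)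
    (hf2 : ∀ x : X, Continuous fun y : Y => f (x, y))
    (B : Set Y) (hBdense : Dense B)
    (hBsigma : ∀ b ∈ B, {t : T | (b : T → ℝ) t ≠ 0}.Countable)
    (hBqc : ∀ b ∈ B, QuasiContinuous fun x : X => f (x, b)) :
    ∃ A : Set X, Dense A ∧ IsGδ A ∧ ∀ x ∈ A, ∀ y : Y, ContinuousAt f (x, y) :=
  namiokaProperty_of_sectionsOscLE hf2 fun _ hW hWne _ hε =>
    exists_sectionsOscLE hYcomp hf2 hBdense hBsigma hBqc hW hWne hε

/-- Theorem 3.1: Namioka-type theorem for a compact `Y ⊆ [0,1]^T` with a dense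
set `B ⊆ Y ∩ Σ` of quasi-continuous sections. -/
theorem namioka_of_dense_sigma_sections {X : Type*} [TopologicalSpace X] [BaireSpace X]
    {T : Type*} (Y : Set (T → ℝ))
    (hYcube : ∀ x ∈ Y, ∀ t, x t ∈ Set.Icc (0 : ℝ) 1)
    (hYcomp : IsCompact Y)
    (f : X × Y → ℝ)
    (hf2 : ∀ x : X, Continuous fun y : Y => f (x, y))
    (B : Set Y) (hBdense : Dense B)
    (hBsigma : ∀ b ∈ B, {t : T | (b : T → ℝ) t ≠ 0}.Countable)
    (hBqc : ∀ b ∈ B, QuasiContinuous fun x : X => f (x, b)) :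
    ∃ A : Set X, Dense A ∧ IsGδ A ∧ ∀ x ∈ A, ∀ y : Y, ContinuousAt f (x, y) :=
  namioka_of_dense_sigma_sections_general Y hYcomp f hf2 B hBdense hBsigma hBqc
end

section
/- Let X be a Baire space and Y a Corson compact (a compact space embeddable into the Σ-subspace of some cube [0,1]^T, where the Σ-subspace consists of points with countable support). Then every function f : X × Y → ℝ that is continuous in the second variable and such that x ↦ f(x,b) is quasi-continuous for all b in some dense subset B ⊆ Y, has the Namioka property. -/
open Topology

/-!
Call `x` good if, for every `y`, `f` oscillates by at most `ε` near `(x, y)`. Since `Y` is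
compact the good points form an open set, and over `ε = 1 / (n + 1)` these sets intersect in the
required `Gδ`; so it suffices that they are dense.

If an open `U₀` had no good point, Baire's theorem would produce a branch of stages. A stage fixes
countably many coordinates `S` and a countable `D ⊆ B` approximating every point of `Y` on finitely
many coordinates of `S`. Countable supports make `closure D` metrizable, and the metrizable case of
the theorem makes the sections `f (·, q)`, `q ∈ D`, uniformly almost constant on the open set of
the stage. At a bad point, quasi-continuity then gives `b ∈ B` and `k ∈ D` whose sections stay
`ε / 4` apart on a smaller open set, although `b` and `k` nearly agree on the coordinates fixed so
far; the supports of `b` and of `D` become coordinates of the next stage. Along the branch, `b n`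
and `k n` thus converge to each other in every coordinate, and compactness of `Y` forces
`f (x, b n) - f (x, k n) → 0` at a common point `x` of the branch: a contradiction.
-/

open Set Filter Function

section Oscillation

variable {Z : Type*} [TopologicalSpace Z]

def OscillationLE (f : Z → ℝ) (ε : ℝ) (z : Z) : Prop :=
  ∃ U ∈ 𝓝 z, ∀ a ∈ U, ∀ b ∈ U, |f a - f b| ≤ ε

theorem isOpen_setOf_oscillationLE (f : Z → ℝ) (ε : ℝ) : IsOpen {z | OscillationLE f ε z} := by
  refine isOpen_iff_mem_nhds.2 fun z ⟨U, hU, hf⟩ => ?_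
  filter_upwards [eventually_mem_nhds_iff.2 hU] with z' hz' using ⟨U, hz', hf⟩

theorem continuousAt_of_forall_oscillationLE {f : Z → ℝ} {z : Z}
    (h : ∀ ε > 0, OscillationLE f ε z) : ContinuousAt f z := by
  refine Metric.tendsto_nhds.2 fun ε hε => ?_
  obtain ⟨U, hU, hf⟩ := h (ε / 2) (half_pos hε)
  filter_upwards [hU] with a ha
  rw [Real.dist_eq]
  linarith [hf a ha z (mem_of_mem_nhds hU)]

theorem exists_half_lt_abs_sub_of_not_oscillationLE {f : Z → ℝ} {ε : ℝ} {z : Z}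
    (h : ¬ OscillationLE f ε z) (c : ℝ) {U : Set Z} (hU : U ∈ 𝓝 z) :
    ∃ a ∈ U, ε / 2 < |f a - c| := by
  simp only [OscillationLE, not_exists, not_and, not_forall, not_le] at h
  obtain ⟨a, ha, b, hb, hab⟩ := h U hU
  by_contra! hc
  have := abs_sub_le (f a) c (f b)
  rw [abs_sub_comm c] at this
  linarith [hc a ha, hc b hb]

theorem isOpen_setOf_forall_oscillationLE {X Y : Type*} [TopologicalSpace X] [TopologicalSpace Y]
    [CompactSpace Y] (f : X × Y → ℝ) (ε : ℝ) :
    IsOpen {x | ∀ y, OscillationLE f ε (x, y)} := by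
  have : {x | ∀ y, OscillationLE f ε (x, y)} = (Prod.fst '' {p | ¬ OscillationLE f ε p})ᶜ := by
    ext x; simp
  rw [this]
  exact (isClosedMap_fst_of_compactSpace _
    (isOpen_setOf_oscillationLE f ε).isClosed_compl).isOpen_compl

end Oscillation

theorem BaireSpace.exists_isOpen_subset_closure {X ι : Type*} [TopologicalSpace X] [BaireSpace X]
    [Countable ι] {V : Set X} (hV : IsOpen V) (hne : V.Nonempty) {C : ι → Set X}
    (hC : V ⊆ ⋃ i, C i) :
    ∃ i, ∃ H, IsOpen H ∧ H.Nonempty ∧ H ⊆ V ∧ H ⊆ closure (C i) := by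
  obtain ⟨i₀, -⟩ := mem_iUnion.1 (hC hne.some_mem)
  have hcover : ⋃ i, (closure (C i) ∪ Vᶜ) = univ := by
    refine eq_univ_of_forall fun x => ?_
    by_cases hx : x ∈ V
    · obtain ⟨i, hi⟩ := mem_iUnion.1 (hC hx)
      exact mem_iUnion.2 ⟨i, Or.inl (subset_closure hi)⟩
    · exact mem_iUnion.2 ⟨i₀, Or.inr hx⟩
  obtain ⟨x, hxV, hxI⟩ := (dense_iUnion_interior_of_closed
    (fun i => isClosed_closure.union hV.isClosed_compl) hcover).inter_open_nonempty V hV hne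
  obtain ⟨i, hi⟩ := mem_iUnion.1 hxI
  refine ⟨i, V ∩ interior (closure (C i) ∪ Vᶜ), hV.inter isOpen_interior, ⟨x, hxV, hi⟩,
    inter_subset_left, fun y ⟨hyV, hy⟩ => ?_⟩
  exact (interior_subset hy).resolve_right (not_not.2 hyV)

theorem QuasiContinuousAt.mem_closure_image_s4 {X Z : Type*} [TopologicalSpace X]
    [TopologicalSpace Z] {g : X → Z} {x : X} (hg : QuasiContinuousAt g x) {H C : Set X}
    (hH : H ∈ 𝓝 x) (hHC : H ⊆ closure C) : g x ∈ closure (g '' C) := by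
  refine mem_closure_iff_nhds.2 fun N hN => ?_
  obtain ⟨G, hG, ⟨z, hz⟩, hGH, hGN⟩ := hg H hH N hN
  obtain ⟨c, hcG, hcC⟩ := mem_closure_iff.1 (hHC (hGH hz)) G hG hz
  exact ⟨g c, hGN (mem_image_of_mem g hcG), mem_image_of_mem g hcC⟩

theorem abs_sub_le_of_mem_closure {s : Set ℝ} {r : ℝ} (h : ∀ a ∈ s, ∀ b ∈ s, |a - b| ≤ r)
    {a b : ℝ} (ha : a ∈ closure s) (hb : b ∈ closure s) : |a - b| ≤ r := by
  have hcl : IsClosed {p : ℝ × ℝ | |p.1 - p.2| ≤ r} :=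
    isClosed_le (continuous_fst.sub continuous_snd).abs continuous_const
  have hsub : closure (s ×ˢ s) ⊆ {p : ℝ × ℝ | |p.1 - p.2| ≤ r} :=
    hcl.closure_subset_iff.2 fun p hp => h p.1 hp.1 p.2 hp.2
  rw [closure_prod_eq] at hsub
  exact hsub (mk_mem_prod ha hb)

/-- `C(K, ℝ)` is separable, so by Baire's theorem the points whose sections lie in one small ball
are dense in an open `H`; quasi-continuity at the points of `D` spreads the bound to all of `H`. -/
theorem exists_isOpen_forall_abs_sub_le {X Y : Type*} [TopologicalSpace X] [BaireSpace X]
    [TopologicalSpace Y] {f : X × Y → ℝ} (hf : ∀ x, Continuous fun y => f (x, y))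
    {K D : Set Y} (hK : IsCompact K) [TopologicalSpace.MetrizableSpace K] (hDK : D ⊆ K)
    (hKD : K ⊆ closure D) (hD : ∀ d ∈ D, QuasiContinuous fun x => f (x, d))
    {V : Set X} (hV : IsOpen V) (hne : V.Nonempty) {ε : ℝ} (hε : 0 < ε) :
    ∃ H, IsOpen H ∧ H.Nonempty ∧ H ⊆ V ∧
      ∀ x ∈ H, ∀ x' ∈ H, ∀ y ∈ K, |f (x, y) - f (x', y)| ≤ ε := by
  have := isCompact_iff_compactSpace.1 hK
  let Φ : X → C(K, ℝ) := fun x => ⟨fun y => f (x, y), (hf x).comp continuous_subtype_val⟩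
  obtain ⟨u, hu⟩ := TopologicalSpace.exists_dense_seq C(K, ℝ)
  let C : ℕ → Set X := fun n => {x ∈ V | dist (Φ x) (u n) < ε / 4}
  obtain ⟨n, H, hH, hHne, hHV, hHC⟩ := BaireSpace.exists_isOpen_subset_closure hV hne (C := C)
    fun x hx => let ⟨n, hn⟩ := hu.exists_dist_lt (Φ x) (by positivity); mem_iUnion.2 ⟨n, hx, hn⟩
  have hC : ∀ x ∈ C n, ∀ x' ∈ C n, ∀ y ∈ K, |f (x, y) - f (x', y)| ≤ ε / 2 := by
    intro x hx x' hx' y hy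
    have h₁ := ContinuousMap.dist_apply_le_dist (f := Φ x) (g := Φ x') ⟨y, hy⟩
    have h₂ := dist_triangle_right (Φ x) (Φ x') (u n)
    change |f (x, y) - f (x', y)| ≤ _ at h₁
    linarith [hx.2, hx'.2]
  refine ⟨H, hH, hHne, hHV, fun x hx x' hx' y hy => ?_⟩
  have hDosc : ∀ d ∈ D, |f (x, d) - f (x', d)| ≤ ε / 2 := by
    refine fun d hd => abs_sub_le_of_mem_closure ?_
      ((hD d hd x).mem_closure_image_s4 (hH.mem_nhds hx) hHC)
      ((hD d hd x').mem_closure_image_s4 (hH.mem_nhds hx') hHC)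
    rintro _ ⟨a, ha, rfl⟩ _ ⟨b, hb, rfl⟩
    exact hC a ha b hb d (hDK hd)
  have hcl : IsClosed {y | |f (x, y) - f (x', y)| ≤ ε / 2} :=
    isClosed_le ((hf x).sub (hf x')).abs continuous_const
  exact (hcl.closure_subset_iff.2 hDosc (hKD hy)).trans (by linarith)

theorem exists_isOpen_abs_sub_lt_of_dense {X Y : Type*} [TopologicalSpace X] [TopologicalSpace Y]
    {f : X × Y → ℝ} (hf : ∀ x, Continuous fun y => f (x, y)) {B : Set Y} (hB : Dense B)
    (hBqc : ∀ b ∈ B, QuasiContinuous fun x => f (x, b)) {x : X} {y : Y} {V : Set X}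
    (hV : V ∈ 𝓝 x) {O : Set Y} (hO : O ∈ 𝓝 y) {η : ℝ} (hη : 0 < η) :
    ∃ b ∈ O, ∃ G, IsOpen G ∧ G.Nonempty ∧ G ⊆ V ∧ ∀ x' ∈ G, |f (x', b) - f (x, y)| < η := by
  obtain ⟨b, ⟨hbO, hby⟩, hbB⟩ := hB.inter_open_nonempty
    (interior O ∩ {y' | |f (x, y') - f (x, y)| < η / 2})
    (isOpen_interior.inter (isOpen_lt ((hf x).sub continuous_const).abs continuous_const))
    ⟨y, mem_interior_iff_mem_nhds.2 hO, by simpa using half_pos hη⟩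
  obtain ⟨G, hG, hGne, hGV, hGb⟩ := hBqc b hbB x V hV _ (Metric.ball_mem_nhds _ (half_pos hη))
  refine ⟨b, interior_subset hbO, G, hG, hGne, hGV, fun x' hx' => ?_⟩
  have hx'b : |f (x', b) - f (x, b)| < η / 2 := by
    simpa [Real.dist_eq] using hGb (mem_image_of_mem _ hx')
  have hby' : |f (x, b) - f (x, y)| < η / 2 := hby
  linarith [abs_sub_le (f (x', b)) (f (x, b)) (f (x, y))]

theorem exists_countable_subset_image_subset_closure {Y Z : Type*} [TopologicalSpace Z]
    [TopologicalSpace.SeparableSpace Z] [TopologicalSpace.PseudoMetrizableSpace Z]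
    (π : Y → Z) (B : Set Y) : ∃ D ⊆ B, D.Countable ∧ π '' B ⊆ closure (π '' D) := by
  obtain ⟨c, hcB, hc, hBc⟩ :=
    (TopologicalSpace.IsSeparable.of_separableSpace (π '' B)).exists_countable_dense_subset
  have : ∀ z : c, ∃ b ∈ B, π b = z := fun z => hcB z.2
  choose g hgB hg using this
  have := hc.to_subtype
  refine ⟨range g, range_subset_iff.2 hgB, countable_range g, hBc.trans (closure_mono ?_)⟩
  rintro z hz
  exact ⟨g ⟨z, hz⟩, mem_range_self _, hg _⟩

section Coordinates

variable {Y T : Type*} [TopologicalSpace Y] {e : Y → T → ℝ}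

def CoordDense (e : Y → T → ℝ) (S : Set T) (D : Set Y) : Prop :=
  ∀ y (F : Set T), F.Finite → F ⊆ S → ∀ δ > 0, ∃ q ∈ D, ∀ t ∈ F, |e q t - e y t| < δ

theorem exists_countable_coordDense (he : Continuous e) {B : Set Y} (hB : Dense B) {S : Set T}
    (hS : S.Countable) : ∃ D ⊆ B, D.Countable ∧ CoordDense e S D := by
  have := hS.to_subtype
  let π : Y → S → ℝ := fun y t => e y t
  have hπ : Continuous π := continuous_pi fun t => (continuous_apply (t : T)).comp he
  obtain ⟨D, hDB, hD, hBD⟩ := exists_countable_subset_image_subset_closure π B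
  refine ⟨D, hDB, hD, fun y F hF hFS δ hδ => ?_⟩
  have hbox : ∀ᶠ z in 𝓝 (π y), ∀ t ∈ Subtype.val ⁻¹' F, |z t - π y t| < δ :=
    (eventually_all_finite (hF.preimage Subtype.val_injective.injOn)).2 fun t _ =>
      (Metric.tendsto_nhds.1 ((continuous_apply t).tendsto (π y)) δ hδ).mono fun z hz => by
        rwa [Real.dist_eq] at hz
  have hy : π y ∈ closure (π '' D) :=
    closure_minimal hBD isClosed_closure (hπ.range_subset_closure_image_dense hB ⟨y, rfl⟩)
  obtain ⟨_, hz, q, hq, rfl⟩ := mem_closure_iff_nhds.1 hy _ hbox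
  exact ⟨q, hq, fun t ht => hz ⟨t, hFS ht⟩ ht⟩

theorem support_subset_of_mem_closure (he : Continuous e) {D : Set Y} {R : Set T}
    (hD : ∀ q ∈ D, support (e q) ⊆ R) {y : Y} (hy : y ∈ closure D) : support (e y) ⊆ R := by
  have hcl : IsClosed {y : Y | support (e y) ⊆ R} := by
    simp only [support_subset_iff', ofPred_forall]
    exact isClosed_biInter fun t _ => isClosed_eq ((continuous_apply t).comp he) continuous_const
  exact closure_minimal hD hcl hy

theorem metrizableSpace_of_support_subset (he : Continuous e) (hinj : Injective e) {K : Set Y}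
    (hK : IsCompact K) {R : Set T} (hR : R.Countable) (hKR : ∀ y ∈ K, support (e y) ⊆ R) :
    TopologicalSpace.MetrizableSpace K := by
  have := hR.to_subtype
  have := isCompact_iff_compactSpace.1 hK
  let π : K → R → ℝ := fun y t => e y t
  have hπ : Continuous π :=
    continuous_pi fun t => (continuous_apply (t : T)).comp (he.comp continuous_subtype_val)
  refine (hπ.isClosedEmbedding fun y y' h => Subtype.ext (hinj (funext fun t => ?_))).isEmbedding
    |>.metrizableSpace
  by_cases ht : t ∈ R
  · exact congrFun h ⟨t, ht⟩
  · rw [notMem_support.1 fun h => ht (hKR y y.2 h), notMem_support.1 fun h => ht (hKR y' y'.2 h)]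

theorem Set.Countable.exists_finite_iUnion_eq {s : Set T} (hs : s.Countable) :
    ∃ g : ℕ → Set T, (∀ j, (g j).Finite) ∧ ⋃ j, g j = s := by
  rcases s.eq_empty_or_nonempty with rfl | hne
  · exact ⟨fun _ => ∅, fun _ => finite_empty, iUnion_empty⟩
  · obtain ⟨u, rfl⟩ := hs.exists_eq_range hne
    exact ⟨fun j => {u j}, fun _ => finite_singleton _, iUnion_singleton_eq_range u⟩

end Coordinates

theorem tendsto_sub_of_forall_tendsto_coord_sub {ι Y T : Type*} [TopologicalSpace Y]
    [CompactSpace Y] {e : Y → T → ℝ} (he : Continuous e) (hinj : Injective e) {g : Y → ℝ}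
    (hg : Continuous g) {l : Filter ι} {b k : ι → Y}
    (h : ∀ t, Tendsto (fun i => e (b i) t - e (k i) t) l (𝓝 0)) :
    Tendsto (fun i => g (b i) - g (k i)) l (𝓝 0) := by
  refine Metric.tendsto_nhds.2 fun δ hδ => ?_
  let Φ : Y × Y → T → ℝ := fun p => e p.1 - e p.2
  have hZ : IsCompact (Φ '' {p | δ ≤ |g p.1 - g p.2|}) :=
    (isClosed_le continuous_const (by fun_prop)).isCompact.image (by fun_prop)
  have h0 : (0 : T → ℝ) ∉ Φ '' {p | δ ≤ |g p.1 - g p.2|} := by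
    rintro ⟨p, hp, hp0⟩
    have : p.1 = p.2 := hinj (sub_eq_zero.1 hp0)
    simp only [mem_ofPred_eq, this, sub_self, abs_zero] at hp
    linarith
  filter_upwards [tendsto_pi_nhds.2 h (hZ.isClosed.isOpen_compl.mem_nhds h0)] with i hi
  rw [Real.dist_eq, sub_zero]
  by_contra! hle
  exact hi ⟨(b i, k i), hle, rfl⟩

section Branch

variable {X N : Type*} [TopologicalSpace X]

theorem exists_pairwiseDisjoint_forall_inter_nonempty (W : N → Set X) {𝒜 : Set N} {U : Set X}
    (hne : ∀ μ ∈ 𝒜, (W μ).Nonempty)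
    (h𝒜 : ∀ G, IsOpen G → G.Nonempty → G ⊆ U → ∃ μ ∈ 𝒜, W μ ⊆ G) :
    ∃ 𝒞 ⊆ 𝒜, 𝒞.PairwiseDisjoint W ∧
      ∀ G, IsOpen G → G.Nonempty → G ⊆ U → ∃ μ ∈ 𝒞, (W μ ∩ G).Nonempty := by
  obtain ⟨𝒞, hmax⟩ := zorn_subset {𝒞 | 𝒞 ⊆ 𝒜 ∧ 𝒞.PairwiseDisjoint W} fun c hc hchain =>
    ⟨⋃₀ c, ⟨sUnion_subset fun s hs => (hc hs).1,
      (hchain.pairwiseDisjoint_sUnion W).2 fun s hs => (hc hs).2⟩,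
      fun s hs => subset_sUnion_of_mem hs⟩
  obtain ⟨h𝒞𝒜, h𝒞⟩ := hmax.1
  refine ⟨𝒞, h𝒞𝒜, h𝒞, fun G hG hGne hGU => ?_⟩
  by_contra! hdisj
  obtain ⟨μ, hμ𝒜, hμG⟩ := h𝒜 G hG hGne hGU
  have hμ : μ ∈ 𝒞 := hmax.2 ⟨insert_subset hμ𝒜 h𝒞𝒜, h𝒞.insert fun ν hν _ =>
    ((disjoint_iff_inter_eq_empty.2 (hdisj ν hν)).symm.mono_left hμG)⟩
    (subset_insert μ 𝒞) (mem_insert μ 𝒞)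
  have := hdisj μ hμ
  rw [inter_eq_left.2 hμG] at this
  exact (hne μ hμ𝒜).ne_empty this

def treeLevels (ν₀ : N) (C : ℕ → N → Set N) : ℕ → Set N
  | 0 => {ν₀}
  | n + 1 => ⋃ ν ∈ treeLevels ν₀ C n, C n ν

theorem treeLevels_spec {W : N → Set X} {P : ℕ → N → Prop} {C : ℕ → N → Set N} {ν₀ : N}
    (h₀ : P 0 ν₀) (hW : ∀ n ν, P n ν → IsOpen (W ν))
    (hC : ∀ n ν, P n ν → ∀ μ ∈ C n ν, P (n + 1) μ ∧ W μ ⊆ W ν)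
    (hCdisj : ∀ n ν, P n ν → (C n ν).PairwiseDisjoint W)
    (hCdense : ∀ n ν, P n ν → ∀ G, IsOpen G → G.Nonempty → G ⊆ W ν →
      ∃ μ ∈ C n ν, (W μ ∩ G).Nonempty) (n : ℕ) :
    (∀ ν ∈ treeLevels ν₀ C n, P n ν) ∧ (treeLevels ν₀ C n).PairwiseDisjoint W ∧
      ∀ G, IsOpen G → G.Nonempty → G ⊆ W ν₀ → ∃ ν ∈ treeLevels ν₀ C n, (W ν ∩ G).Nonempty := by
  induction n with
  | zero =>
    refine ⟨fun ν hν => (mem_singleton_iff.1 hν) ▸ h₀, pairwiseDisjoint_singleton _ _,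
      fun G _ hGne hGW => ⟨ν₀, rfl, by rwa [inter_eq_right.2 hGW]⟩⟩
  | succ n ih =>
    obtain ⟨hP, hdisj, hdense⟩ := ih
    refine ⟨fun μ hμ => ?_, ?_, fun G hG hGne hGW => ?_⟩
    · obtain ⟨ν, hν, hμ⟩ := mem_iUnion₂.1 hμ
      exact (hC n ν (hP ν hν) μ hμ).1
    · refine PairwiseDisjoint.biUnion (hdisj.mono_on fun ν hν => ?_)
        fun ν hν => hCdisj n ν (hP ν hν)
      exact iSup₂_le fun μ hμ => (hC n ν (hP ν hν) μ hμ).2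
    · obtain ⟨ν, hν, hνG⟩ := hdense G hG hGne hGW
      obtain ⟨μ, hμ, x, hxμ, -, hxG⟩ := hCdense n ν (hP ν hν) (W ν ∩ G)
        ((hW n ν (hP ν hν)).inter hG) hνG inter_subset_left
      exact ⟨μ, mem_iUnion₂.2 ⟨ν, hν, hμ⟩, x, hxμ, hxG⟩

/-- Each level is a maximal disjoint family of children, hence dense below the root; a point of
the dense `Gδ` formed by the unions of the levels picks out the branch. -/
theorem BaireSpace.exists_branch [BaireSpace X] (W : N → Set X) (P : ℕ → N → Prop)
    (R : ℕ → N → N → Prop) (hW : ∀ n ν, P n ν → IsOpen (W ν) ∧ (W ν).Nonempty) {ν₀ : N}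
    (h₀ : P 0 ν₀) (hstep : ∀ n ν, P n ν → ∀ V, IsOpen V → V.Nonempty → V ⊆ W ν →
      ∃ μ, P (n + 1) μ ∧ R n ν μ ∧ W μ ⊆ V) :
    ∃ (ν : ℕ → N) (x : X), ∀ n, R n (ν n) (ν (n + 1)) ∧ x ∈ W (ν n) := by
  have hchildren : ∀ n ν, P n ν → ∃ 𝒞 ⊆ {μ | P (n + 1) μ ∧ R n ν μ ∧ W μ ⊆ W ν},
      𝒞.PairwiseDisjoint W ∧ ∀ G, IsOpen G → G.Nonempty → G ⊆ W ν →
        ∃ μ ∈ 𝒞, (W μ ∩ G).Nonempty := fun n ν hν =>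
    exists_pairwiseDisjoint_forall_inter_nonempty W (fun μ hμ => (hW _ μ hμ.1).2)
      fun G hG hGne hGW =>
        let ⟨μ, hμ, hR, hμG⟩ := hstep n ν hν G hG hGne hGW
        ⟨μ, ⟨hμ, hR, hμG.trans hGW⟩, hμG⟩
  choose! C hCsub hCdisj hCdense using hchildren
  have hL := treeLevels_spec (W := W) h₀ (fun n ν hν => (hW n ν hν).1)
    (fun n ν hν μ hμ => ⟨(hCsub n ν hν hμ).1, (hCsub n ν hν hμ).2.2⟩) hCdisj hCdense
  set L := treeLevels ν₀ C
  obtain ⟨hW₀, hW₀ne⟩ := hW 0 ν₀ h₀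
  let D : ℕ → Set X := fun n => (⋃ ν ∈ L n, W ν) ∪ (closure (W ν₀))ᶜ
  have hD : ∀ n, IsOpen (D n) := fun n =>
    (isOpen_biUnion fun ν hν => (hW n ν ((hL n).1 ν hν)).1).union isClosed_closure.isOpen_compl
  have hDdense : ∀ n, Dense (D n) := by
    refine fun n => dense_iff_inter_open.2 fun G hG ⟨x, hxG⟩ => ?_
    by_cases hGW : (G ∩ W ν₀).Nonempty
    · obtain ⟨ν, hν, y, hyν, hyG, -⟩ := (hL n).2.2 _ (hG.inter hW₀) hGW inter_subset_right
      exact ⟨y, hyG, Or.inl (mem_biUnion hν hyν)⟩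
    · exact ⟨x, hxG, Or.inr fun hx => hGW (mem_closure_iff.1 hx G hG hxG)⟩
  obtain ⟨x, hxW₀, hxD⟩ := (dense_iInter_of_isOpen hD hDdense).inter_open_nonempty _ hW₀ hW₀ne
  have hbranch : ∀ n, ∃ ν ∈ L n, x ∈ W ν := fun n =>
    (mem_iInter.1 hxD n).elim (fun h => by simpa using h) fun h => (h (subset_closure hxW₀)).elim
  choose ν hνL hxν using hbranch
  refine ⟨ν, x, fun n => ⟨?_, hxν n⟩⟩
  obtain ⟨p, hp, hνp⟩ := mem_iUnion₂.1 (hνL (n + 1))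
  have hpν := (hCsub n p ((hL n).1 p hp) hνp)
  obtain rfl : p = ν n := (hL n).2.1.elim_set hp (hνL n) x (hpν.2.2 (hxν (n + 1))) (hxν n)
  exact hpν.2.1

end Branch

theorem tendsto_coord_sub_of_forall_abs_sub_lt {Y T : Type*} {e : Y → T → ℝ} {E : ℕ → ℕ → Set T}
    (hE : ∀ n j, E n j ⊆ E (n + 1) j) {b k : ℕ → Y}
    (hb : ∀ n, support (e (b n)) ⊆ ⋃ j, E (n + 1) j)
    (hk : ∀ n, support (e (k n)) ⊆ ⋃ j, E (n + 1) j)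
    (hbk : ∀ n, ∀ j ≤ n, ∀ t ∈ E n j, |e (b n) t - e (k n) t| < (1 / 2) ^ n) (t : T) :
    Tendsto (fun n => e (b n) t - e (k n) t) atTop (𝓝 0) := by
  by_cases ht : ∃ m j, t ∈ E m j
  · obtain ⟨m, j, htm⟩ := ht
    have hmono : ∀ n ≥ m, t ∈ E n j := fun n hn =>
      monotone_nat_of_le_succ (fun n => hE n j) hn htm
    refine squeeze_zero_norm' ?_ (tendsto_pow_atTop_nhds_zero_of_lt_one (by norm_num)
      (by norm_num : (1 / 2 : ℝ) < 1))
    filter_upwards [eventually_ge_atTop (max m j)] with n hn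
    exact (hbk n j (le_of_max_le_right hn) t (hmono n (le_of_max_le_left hn))).le
  · have hzero : ∀ n, e (b n) t - e (k n) t = 0 := fun n => by
      have hnot : t ∉ ⋃ j, E (n + 1) j := fun h =>
        let ⟨j, hj⟩ := mem_iUnion.1 h; ht ⟨n + 1, j, hj⟩
      rw [notMem_support.1 fun h => hnot (hb n h), notMem_support.1 fun h => hnot (hk n h),
        sub_self]
    simpa only [hzero] using tendsto_const_nhds

/-- The coordinates fixed at a stage are `⋃ j, E j`, cut into finite pieces so that they can be
exhausted diagonally along a branch. -/
structure Stage (X Y T : Type*) where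
  W : Set X
  E : ℕ → Set T
  D : Set Y

namespace Stage

variable {X Y T : Type*} [TopologicalSpace X] [TopologicalSpace Y] (e : Y → T → ℝ)
  (f : X × Y → ℝ)

structure Valid (η : ℝ) (ν : Stage X Y T) : Prop where
  isOpen : IsOpen ν.W
  nonempty : ν.W.Nonempty
  finite : ∀ j, (ν.E j).Finite
  countable : ν.D.Countable
  coordDense : CoordDense e (⋃ j, ν.E j) ν.D
  oscillation_le : ∀ x ∈ ν.W, ∀ x' ∈ ν.W, ∀ q ∈ ν.D, |f (x, q) - f (x', q)| ≤ η

def Refines (δ : ℝ) (n : ℕ) (ν μ : Stage X Y T) : Prop :=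
  (∀ j, ν.E j ⊆ μ.E j) ∧ ∃ b k : Y, support (e b) ⊆ ⋃ j, μ.E j ∧ support (e k) ⊆ ⋃ j, μ.E j ∧
    (∀ x ∈ μ.W, δ ≤ |f (x, b) - f (x, k)|) ∧ ∀ j ≤ n, ∀ t ∈ ν.E j, |e b t - e k t| < (1 / 2) ^ n

variable {e f} [BaireSpace X] [CompactSpace Y] {B : Set Y}

theorem exists_valid (he : Continuous e) (hinj : Injective e)
    (hsupp : ∀ y, (support (e y)).Countable) (hf : ∀ x, Continuous fun y => f (x, y))
    (hB : Dense B) (hBqc : ∀ b ∈ B, QuasiContinuous fun x => f (x, b)) {G : Set X}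
    (hG : IsOpen G) (hGne : G.Nonempty) (E₀ : ℕ → Set T) (hE₀ : ∀ j, (E₀ j).Finite)
    {A : Set T} (hA : A.Countable) {η : ℝ} (hη : 0 < η) :
    ∃ μ : Stage X Y T, μ.Valid e f η ∧ μ.W ⊆ G ∧ (∀ j, E₀ j ⊆ μ.E j) ∧ A ⊆ ⋃ j, μ.E j := by
  obtain ⟨g, hg, rfl⟩ := hA.exists_finite_iUnion_eq
  have hE : ∀ j, (E₀ j ∪ g j).Finite := fun j => (hE₀ j).union (hg j)
  obtain ⟨D, hDB, hD, hDdense⟩ :=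
    exists_countable_coordDense he hB (countable_iUnion fun j => (hE j).countable)
  have := metrizableSpace_of_support_subset he hinj isClosed_closure.isCompact
    (hD.biUnion fun q _ => hsupp q) fun y hy =>
      support_subset_of_mem_closure he
        (fun q hq => subset_biUnion_of_mem (u := fun q => support (e q)) hq) hy
  obtain ⟨H, hH, hHne, hHG, hosc⟩ := exists_isOpen_forall_abs_sub_le hf
    isClosed_closure.isCompact subset_closure subset_rfl (fun d hd => hBqc d (hDB hd)) hG hGne hη
  exact ⟨⟨H, fun j => E₀ j ∪ g j, D⟩, ⟨hH, hHne, hE, hD, hDdense,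
    fun x hx x' hx' q hq => hosc x hx x' hx' q (subset_closure hq)⟩,
    hHG, fun j => subset_union_left, iUnion_mono fun j => subset_union_right⟩

theorem exists_refines (he : Continuous e) (hinj : Injective e)
    (hsupp : ∀ y, (support (e y)).Countable) (hf : ∀ x, Continuous fun y => f (x, y))
    (hB : Dense B) (hBqc : ∀ b ∈ B, QuasiContinuous fun x => f (x, b)) {ε : ℝ} (hε : 0 < ε)
    {U₀ : Set X} (hbad : ∀ x ∈ U₀, ∃ y, ¬ OscillationLE f ε (x, y)) (n : ℕ)
    {ν : Stage X Y T} (hν : ν.Valid e f (ε / 16)) {V : Set X} (hV : IsOpen V)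
    (hVne : V.Nonempty) (hVU : V ⊆ U₀) (hVW : V ⊆ ν.W) :
    ∃ μ : Stage X Y T, μ.Valid e f (ε / 16) ∧ Refines e f (ε / 4) n ν μ ∧ μ.W ⊆ V := by
  obtain ⟨xs, hxs⟩ := hVne
  obtain ⟨ys, hys⟩ := hbad xs (hVU hxs)
  have hC : (⋃ j ∈ Iic n, ν.E j).Finite := (finite_Iic n).biUnion fun j _ => hν.finite j
  -- `k ∈ ν.D` and the later `b ∈ O` both copy `ys` on the coordinates `ν.E j`, `j ≤ n`.
  obtain ⟨k, hkD, hk⟩ := hν.coordDense ys _ hC (iUnion₂_subset fun j _ => subset_iUnion ν.E j)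
    ((1 / 2) ^ (n + 1)) (by positivity)
  set O := ⋂ t ∈ ⋃ j ∈ Iic n, ν.E j, {y | |e y t - e ys t| < (1 / 2) ^ (n + 1)}
  have hO : IsOpen O := hC.isOpen_biInter fun t _ =>
    isOpen_lt (((continuous_apply t).comp he).sub continuous_const).abs continuous_const
  have hysO : ys ∈ O := mem_iInter₂.2 fun t _ => by simp
  obtain ⟨⟨xt, yt⟩, ⟨hxt, hyt⟩, hfar⟩ := exists_half_lt_abs_sub_of_not_oscillationLE hys
    (f (xs, k)) (prod_mem_nhds (hV.mem_nhds hxs) (hO.mem_nhds hysO))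
  obtain ⟨b, hbO, G, hG, hGne, hGV, hGb⟩ := exists_isOpen_abs_sub_lt_of_dense hf hB hBqc
    (hV.mem_nhds hxt) (hO.mem_nhds hyt) (by positivity : 0 < ε / 16)
  obtain ⟨μ, hμ, hμG, hνμ, hμA⟩ := exists_valid he hinj hsupp hf hB hBqc hG hGne ν.E hν.finite
    ((hν.countable.biUnion fun q _ => hsupp q).union (hsupp b)) (by positivity : 0 < ε / 16)
  refine ⟨μ, hμ, ⟨hνμ, b, k, subset_union_right.trans hμA,
    ((subset_biUnion_of_mem (u := fun q => support (e q)) hkD).trans subset_union_left).trans hμA,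
    fun x hx => ?_, fun j hj t ht => ?_⟩, hμG.trans hGV⟩
  · have hxb := hGb x (hμG hx)
    have hxk := hν.oscillation_le x (hVW (hGV (hμG hx))) xs (hVW hxs) k hkD
    have := abs_sub_le (f (xt, yt)) (f (x, b)) (f (xs, k))
    have := abs_sub_le (f (x, b)) (f (x, k)) (f (xs, k))
    rw [abs_sub_comm] at hxb
    linarith
  · have hbt := mem_iInter₂.1 hbO t (mem_biUnion (mem_Iic.2 hj) ht)
    have hkt := hk t (mem_biUnion (mem_Iic.2 hj) ht)
    have := abs_sub_le (e b t) (e ys t) (e k t)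
    rw [abs_sub_comm (e ys t)] at this
    calc |e b t - e k t| < (1 / 2) ^ (n + 1) + (1 / 2) ^ (n + 1) := by linarith [hbt.out]
      _ = (1 / 2) ^ n := by ring

end Stage

theorem dense_setOf_forall_oscillationLE {X Y T : Type*} [TopologicalSpace X] [BaireSpace X]
    [TopologicalSpace Y] [CompactSpace Y] {e : Y → T → ℝ} (he : Continuous e)
    (hinj : Injective e) (hsupp : ∀ y, (support (e y)).Countable) {f : X × Y → ℝ}
    (hf : ∀ x, Continuous fun y => f (x, y)) {B : Set Y} (hB : Dense B)
    (hBqc : ∀ b ∈ B, QuasiContinuous fun x => f (x, b)) {ε : ℝ} (hε : 0 < ε) :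
    Dense {x | ∀ y, OscillationLE f ε (x, y)} := by
  refine dense_iff_inter_open.2 fun U₀ hU₀ hU₀ne => ?_
  by_contra hempty
  have hbad : ∀ x ∈ U₀, ∃ y, ¬ OscillationLE f ε (x, y) := fun x hx =>
    not_forall.1 fun h => hempty ⟨x, hx, h⟩
  obtain ⟨ν₀, hν₀, hν₀U, -⟩ := Stage.exists_valid he hinj hsupp hf hB hBqc hU₀ hU₀ne
    (fun _ => ∅) (fun _ => finite_empty) countable_empty (by positivity : 0 < ε / 16)
  obtain ⟨ν, x, hν⟩ := BaireSpace.exists_branch Stage.W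
    (fun _ ν => ν.Valid e f (ε / 16) ∧ ν.W ⊆ U₀) (Stage.Refines e f (ε / 4))
    (fun _ ν hν => ⟨hν.1.isOpen, hν.1.nonempty⟩) ⟨hν₀, hν₀U⟩ fun n ν hν V hV hVne hVW =>
      let ⟨μ, hμ, hνμ, hμV⟩ :=
        Stage.exists_refines he hinj hsupp hf hB hBqc hε hbad n hν.1 hV hVne (hVW.trans hν.2) hVW
      ⟨μ, ⟨hμ, hμV.trans (hVW.trans hν.2)⟩, hνμ, hμV⟩
  choose b k hb hk hsep hbk using fun n => (hν n).1.2
  have hlim := tendsto_sub_of_forall_tendsto_coord_sub he hinj (hf x)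
    (tendsto_coord_sub_of_forall_abs_sub_lt (fun n => (hν n).1.1) hb hk hbk)
  obtain ⟨n, hn⟩ := (Metric.tendsto_nhds.1 hlim (ε / 4) (by positivity)).exists
  rw [Real.dist_eq, sub_zero] at hn
  exact (hsep n x (hν (n + 1)).2).not_gt hn

theorem namioka_of_corson_general {X Y T : Type*} [TopologicalSpace X] [BaireSpace X]
    [TopologicalSpace Y] [CompactSpace Y]
    (e : Y → (T → ℝ)) (he : Topology.IsEmbedding e)
    (hsupp : ∀ y, {t : T | e y t ≠ 0}.Countable)
    (f : X × Y → ℝ)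
    (hf2 : ∀ x : X, Continuous fun y => f (x, y))
    (B : Set Y) (hBdense : Dense B)
    (hBqc : ∀ b ∈ B, QuasiContinuous fun x : X => f (x, b)) :
    NamiokaProperty f := by
  have hopen := fun n : ℕ => isOpen_setOf_forall_oscillationLE f (1 / (n + 1))
  refine ⟨⋂ n : ℕ, {x | ∀ y, OscillationLE f (1 / (n + 1)) (x, y)},
    dense_iInter_of_isOpen hopen fun n => dense_setOf_forall_oscillationLE he.continuous
      he.injective hsupp hf2 hBdense hBqc (by positivity),
    .iInter fun n => (hopen n).isGδ, fun x hx y => continuousAt_of_forall_oscillationLE ?_⟩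
  intro ε hε
  obtain ⟨n, hn⟩ := exists_nat_one_div_lt hε
  obtain ⟨U, hU, hfU⟩ := mem_iInter.1 hx n y
  exact ⟨U, hU, fun a ha b hb => (hfU a ha b hb).trans hn.le⟩

/-- Corollary 3.3: if `Y` is a Corson compact then every `f : X × Y → ℝ`
continuous in the second variable with quasi-continuous sections `f_b` for `b` in a dense set
has the Namioka property. -/
theorem namioka_of_corson {X Y T : Type*} [TopologicalSpace X] [BaireSpace X]
    [TopologicalSpace Y] [CompactSpace Y]
    (e : Y → (T → ℝ)) (he : Topology.IsEmbedding e)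
    (hcube : ∀ y t, e y t ∈ Set.Icc (0 : ℝ) 1)
    (hsupp : ∀ y, {t : T | e y t ≠ 0}.Countable)
    (f : X × Y → ℝ)
    (hf2 : ∀ x : X, Continuous fun y => f (x, y))
    (B : Set Y) (hBdense : Dense B)
    (hBqc : ∀ b ∈ B, QuasiContinuous fun x : X => f (x, b)) :
    NamiokaProperty f :=
  namioka_of_corson_general e he hsupp f hf2 B hBdense hBqc
end

section
/- Every Valdivia compact space is a Kempisty space: if Y is a Valdivia compact, X is a Baire space, and f : X × Y → ℝ is quasi-continuous in the first variable and continuous in the second variable, then f has the Namioka property. -/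
/-!
For a countable set `S` of coordinates, the points of `Y` supported in `S` form a compact
metrizable space, and over it the classical Namioka argument (Baire category in `X`, separability
of `C(K, ℝ)`, quasi-continuity) yields open sets on which `f` oscillates little. As `Y` is
Valdivia, every countable set of coordinates lies in a countable `S` onto which `e(Y)` projects.
If small oscillation failed on an open set `U`, one could play the Banach–Mazur game in `U`,
choosing at each move a point `y` and its projection `w` onto the current `S` that stay
`ε / 4` apart under `f` on the next open set. A point `x` in the intersection of the play, which
exists because `X` is Baire, then separates pairs `(y n, w n)` that agree on more and more
coordinates, which compactness of `Y` and continuity of `f (x, ·)` forbid. Small oscillation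
on open sets gives the Namioka property.
-/

open Topology

open Set Filter Function

section Baire

variable {X : Type*} [TopologicalSpace X] [BaireSpace X]

theorem exists_isOpen_subset_closure_of_subset_iUnion {ι : Type*} [Countable ι]
    {U : Set X} (hU : IsOpen U) (hne : U.Nonempty) {E : ι → Set X} (hE : U ⊆ ⋃ i, E i) :
    ∃ i, ∃ V ⊆ U, IsOpen V ∧ V.Nonempty ∧ V ⊆ closure (E i) := by
  by_contra! h
  have hnd : ∀ i, IsNowhereDense (E i ∩ U) := by
    refine fun i ↦ eq_empty_iff_forall_notMem.2 fun x hx ↦ ?_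
    have hxU : x ∈ closure U := closure_mono inter_subset_right (interior_subset hx)
    obtain ⟨z, hz⟩ := mem_closure_iff.1 hxU _ isOpen_interior hx
    refine h i _ inter_subset_right (isOpen_interior.inter hU) ⟨z, hz⟩ ?_
    exact inter_subset_left.trans (interior_subset.trans (closure_mono inter_subset_left))
  refine not_isMeagre_of_isOpen hU hne ((isMeagre_iUnion fun i ↦ (hnd i).isMeagre).mono ?_)
  intro x hx
  obtain ⟨i, hi⟩ := mem_iUnion.1 (hE hx)
  exact mem_iUnion.2 ⟨i, hi, hx⟩

theorem IsOpen.inter_iInter_nonempty_of_subset_closure {O : Set X} (hO : IsOpen O)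
    (hne : O.Nonempty) {D : ℕ → Set X} (hD : ∀ n, IsOpen (D n))
    (hOD : ∀ n, O ⊆ closure (D n)) : (O ∩ ⋂ n, D n).Nonempty := by
  have hdense : ∀ n, Dense (D n ∪ (closure O)ᶜ) := by
    refine fun n ↦ dense_iff_closure_eq.2 (eq_univ_of_subset ?_ (union_compl_self (closure O)))
    rw [closure_union]
    exact union_subset_union (closure_minimal (hOD n) isClosed_closure) subset_closure
  obtain ⟨x, hxO, hx⟩ := (dense_iInter_of_isOpen_nat
    (fun n ↦ (hD n).union isClosed_closure.isOpen_compl) hdense).inter_open_nonempty O hO hne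
  exact ⟨x, hxO, mem_iInter.2 fun n ↦
    (mem_iInter.1 hx n).resolve_right (not_not.2 (subset_closure hxO))⟩

end Baire

section BanachMazur

variable {X : Type*} [TopologicalSpace X]

theorem exists_pairwiseDisjoint_subset_closure {σ : Type*} (O : σ → Set X) (P : Set σ)
    {W : Set X} (hW : IsOpen W)
    (hP : ∀ V, IsOpen V → V.Nonempty → V ⊆ W → ∃ s ∈ P, (O s).Nonempty ∧ O s ⊆ V) :
    ∃ A ⊆ P, A.PairwiseDisjoint O ∧ W ⊆ closure (⋃ s ∈ A, O s) := by
  obtain ⟨A, hA⟩ := zorn_subset {A | A ⊆ P ∧ A.PairwiseDisjoint O} fun c hc hchain ↦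
    ⟨⋃₀ c, ⟨sUnion_subset fun A hA ↦ (hc hA).1,
      (pairwiseDisjoint_sUnion hchain.directedOn).2 fun A hA ↦ (hc hA).2⟩,
      fun _ ↦ subset_sUnion_of_mem⟩
  refine ⟨A, hA.prop.1, hA.prop.2, fun x hx ↦ mem_closure_iff.2 fun N hN hxN ↦ ?_⟩
  by_contra hdisj
  obtain ⟨s, hsP, ⟨z, hz⟩, hsN⟩ := hP _ (hN.inter hW) ⟨x, hxN, hx⟩ inter_subset_right
  have hsA : s ∈ A := by
    refine hA.mem_of_prop_insert ⟨insert_subset hsP hA.prop.1, hA.prop.2.insert fun t ht _ ↦ ?_⟩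
    exact disjoint_left.2 fun y hys hyt ↦ hdisj ⟨y, (hsN hys).1, mem_biUnion ht hyt⟩
  exact hdisj ⟨z, (hsN hz).1, mem_biUnion hsA hz⟩

/-- In the Banach–Mazur game on a Baire space, a strategy `R` of the player who wants an empty
intersection is defeated by some play. -/
theorem BaireSpace.exists_play_nonempty_iInter [BaireSpace X] {σ : Type*} (O : σ → Set X)
    (R : σ → σ → Prop)
    (hR : ∀ s V, IsOpen V → V.Nonempty → V ⊆ O s →
      ∃ s', R s s' ∧ IsOpen (O s') ∧ (O s').Nonempty ∧ O s' ⊆ V)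
    {s₀ : σ} (h₀ : IsOpen (O s₀)) (h₀' : (O s₀).Nonempty) :
    ∃ p : ℕ → σ, p 0 = s₀ ∧ (∀ n, R (p n) (p (n + 1))) ∧ (⋂ n, O (p n)).Nonempty := by
  let Good : σ → Prop := fun s ↦ IsOpen (O s) ∧ (O s).Nonempty
  choose! A hAP hA hA_dense using fun s (hs : Good s) ↦
    exists_pairwiseDisjoint_subset_closure O {s' | R s s' ∧ Good s' ∧ O s' ⊆ O s} hs.1
      fun V hV hVne hVs ↦ by
        obtain ⟨s', hR', ho, hne, hsub⟩ := hR s V hV hVne hVs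
        exact ⟨s', ⟨hR', ⟨ho, hne⟩, hsub.trans hVs⟩, hne, hsub⟩
  -- `L n` is the `n`-th level of the tree of all plays following `R` through the families `A`
  let L : ℕ → Set σ := fun n ↦ Nat.rec {s₀} (fun _ Ln ↦ ⋃ s ∈ Ln, A s) n
  have hL : ∀ n, (∀ s ∈ L n, Good s) ∧ (L n).PairwiseDisjoint O := by
    intro n
    induction n with
    | zero => exact ⟨fun s hs ↦ mem_singleton_iff.1 hs ▸ ⟨h₀, h₀'⟩, pairwiseDisjoint_singleton _ _⟩
    | succ n ih =>
      refine ⟨fun s hs ↦ ?_, ?_⟩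
      · obtain ⟨t, ht, hs⟩ := mem_iUnion₂.1 hs
        exact (hAP t (ih.1 t ht) hs).2.1
      · refine .biUnion (ih.2.mono_on fun t ht ↦ ?_) fun t ht ↦ hA t (ih.1 t ht)
        exact iUnion₂_subset fun s hs ↦ (hAP t (ih.1 t ht) hs).2.2
  let D : ℕ → Set X := fun n ↦ ⋃ s ∈ L n, O s
  have hD_succ : ∀ n, D n ⊆ closure (D (n + 1)) := by
    refine fun n ↦ iUnion₂_subset fun s hs ↦ (hA_dense s ((hL n).1 s hs)).trans (closure_mono ?_)
    exact iUnion₂_subset fun s' hs' ↦ subset_biUnion_of_mem (u := O) (mem_biUnion hs hs')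
  have hD_dense : ∀ n, O s₀ ⊆ closure (D n) := by
    intro n
    induction n with
    | zero => exact subset_closure.trans (closure_mono (subset_biUnion_of_mem (mem_singleton s₀)))
    | succ n ih => exact ih.trans (closure_minimal (hD_succ n) isClosed_closure)
  obtain ⟨x, -, hx⟩ := h₀.inter_iInter_nonempty_of_subset_closure h₀'
    (fun n ↦ isOpen_biUnion fun s hs ↦ ((hL n).1 s hs).1) hD_dense
  choose p hpL hxp using fun n ↦ mem_iUnion₂.1 (mem_iInter.1 hx n)
  refine ⟨p, mem_singleton_iff.1 (hpL 0), fun n ↦ ?_, x, mem_iInter.2 hxp⟩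
  obtain ⟨t, ht, hpt⟩ := mem_iUnion₂.1 (hpL (n + 1))
  have htR := hAP t ((hL n).1 t ht) hpt
  have htp : t = p n := (hL n).2.elim_set ht (hpL n) x (htR.2.2 (hxp (n + 1))) (hxp n)
  exact htp ▸ htR.1

end BanachMazur

section QuasiContinuity

variable {X Z : Type*} [TopologicalSpace X]

theorem QuasiContinuousAt.mem_closure_image_s6 [TopologicalSpace Z] {h : X → Z} {x : X}
    (hq : QuasiContinuousAt h x) {V E : Set X} (hV : V ∈ 𝓝 x) (hVE : V ⊆ closure E) :
    h x ∈ closure (h '' E) := by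
  refine mem_closure_iff_nhds.2 fun N hN ↦ ?_
  obtain ⟨G, hG, ⟨z, hz⟩, hGV, hGN⟩ := hq V hV N hN
  obtain ⟨w, hwG, hwE⟩ := mem_closure_iff.1 (hVE (hGV hz)) G hG hz
  exact ⟨h w, hGN (mem_image_of_mem h hwG), mem_image_of_mem h hwE⟩

theorem dist_le_of_quasiContinuousAt [PseudoMetricSpace Z] {h : X → Z} {V E : Set X} {r : ℝ}
    (hq : ∀ x ∈ V, QuasiContinuousAt h x) (hV : IsOpen V) (hVE : V ⊆ closure E)
    (hE : ∀ z ∈ E, ∀ z' ∈ E, dist (h z) (h z') ≤ r) :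
    ∀ x ∈ V, ∀ x' ∈ V, dist (h x) (h x') ≤ r := by
  intro x hx x' hx'
  have hmem : (h x, h x') ∈ closure ((h '' E) ×ˢ (h '' E)) := by
    rw [closure_prod_eq]
    exact ⟨(hq x hx).mem_closure_image_s6 (hV.mem_nhds hx) hVE,
      (hq x' hx').mem_closure_image_s6 (hV.mem_nhds hx') hVE⟩
  refine closure_minimal ?_ (isClosed_le continuous_dist continuous_const) hmem
  rintro ⟨_, _⟩ ⟨⟨z, hz, rfl⟩, ⟨z', hz', rfl⟩⟩
  exact hE z hz z' hz'

theorem exists_isOpen_forall_le_abs_sub {Y : Type*} {f : X × Y → ℝ}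
    (hf₁ : ∀ y, QuasiContinuous fun x ↦ f (x, y)) {ε : ℝ} (hε : 0 < ε) {V : Set X} (hV : IsOpen V)
    {y w : Y}
    (hw : ∀ x ∈ V, ∀ x' ∈ V, |f (x, w) - f (x', w)| ≤ ε / 8) {x x' : X} (hx : x ∈ V)
    (hx' : x' ∈ V) (hy : ε < |f (x, y) - f (x', y)|) :
    ∃ G ⊆ V, IsOpen G ∧ G.Nonempty ∧ ∀ z ∈ G, ε / 4 ≤ |f (z, y) - f (z, w)| := by
  let φ : X → ℝ := fun z ↦ f (z, y) - f (z, w)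
  obtain ⟨xp, hxp, hφxp⟩ : ∃ xp ∈ V, 7 * ε / 16 < |φ xp| := by
    have h := abs_sub_abs_le_abs_sub (f (x, y) - f (x', y)) (f (x, w) - f (x', w))
    rw [show f (x, y) - f (x', y) - (f (x, w) - f (x', w)) = φ x - φ x' by ring] at h
    by_contra! hsmall
    linarith [abs_sub (φ x) (φ x'), hsmall x hx, hsmall x' hx', hw x hx x' hx']
  obtain ⟨G, hG, hGne, hGV, hGy⟩ := hf₁ y xp V (hV.mem_nhds hxp) _
    (Metric.ball_mem_nhds _ (by positivity : 0 < ε / 16))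
  refine ⟨G, hGV, hG, hGne, fun z hz ↦ ?_⟩
  have hzy : |f (z, y) - f (xp, y)| < ε / 16 := by
    simpa [Real.dist_eq] using hGy (mem_image_of_mem _ hz)
  have h := abs_sub_abs_le_abs_sub (φ xp) (φ z)
  rw [show φ xp - φ z = f (z, w) - f (xp, w) - (f (z, y) - f (xp, y)) by ring] at h
  linarith [abs_sub (f (z, w) - f (xp, w)) (f (z, y) - f (xp, y)), hw z (hGV hz) xp hxp]

end QuasiContinuity

section Namioka

variable {X Y : Type*} [TopologicalSpace X] [TopologicalSpace Y]

def IsUniformlyCloseOn (f : X × Y → ℝ) (V : Set X) (ε : ℝ) : Prop :=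
  ∀ x ∈ V, ∀ x' ∈ V, ∀ y, |f (x, y) - f (x', y)| ≤ ε

theorem namiokaProperty_of_exists_isUniformlyCloseOn [BaireSpace X] {f : X × Y → ℝ}
    (hf₂ : ∀ x, Continuous fun y ↦ f (x, y))
    (h : ∀ ε > 0, ∀ U, IsOpen U → U.Nonempty →
      ∃ V ⊆ U, IsOpen V ∧ V.Nonempty ∧ IsUniformlyCloseOn f V ε) :
    NamiokaProperty f := by
  let G : ℝ → Set X := fun ε ↦ ⋃₀ {V | IsOpen V ∧ IsUniformlyCloseOn f V ε}
  have hG_open : ∀ ε, IsOpen (G ε) := fun ε ↦ isOpen_sUnion fun V hV ↦ hV.1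
  have hG_dense : ∀ ε > 0, Dense (G ε) := by
    refine fun ε hε ↦ dense_iff_inter_open.2 fun U hU hne ↦ ?_
    obtain ⟨V, hVU, hV, ⟨x, hx⟩, hclose⟩ := h ε hε U hU hne
    exact ⟨x, hVU hx, V, ⟨hV, hclose⟩, hx⟩
  refine ⟨⋂ n : ℕ, G (1 / (n + 1)), dense_iInter_of_isOpen_nat (fun n ↦ hG_open _)
      (fun n ↦ hG_dense _ Nat.one_div_pos_of_nat), .iInter fun n ↦ (hG_open _).isGδ, ?_⟩
  intro x hx y₀
  refine Metric.tendsto_nhds.2 fun δ hδ ↦ ?_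
  obtain ⟨n, hn⟩ := exists_nat_one_div_lt (half_pos hδ)
  obtain ⟨V, ⟨hV, hclose⟩, hxV⟩ := mem_iInter.1 hx n
  have hy : ∀ᶠ y in 𝓝 y₀, dist (f (x, y)) (f (x, y₀)) < δ / 2 :=
    Metric.tendsto_nhds.1 ((hf₂ x).tendsto y₀) _ (half_pos hδ)
  filter_upwards [Filter.Eventually.prodMk_nhds (hV.mem_nhds hxV) hy] with ⟨x', y⟩ ⟨hx', hy⟩
  rw [Real.dist_eq] at hy ⊢
  calc |f (x', y) - f (x, y₀)| ≤ |f (x', y) - f (x, y)| + |f (x, y) - f (x, y₀)| :=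
        abs_sub_le _ _ _
    _ < δ := by linarith [hclose x' hx' x hxV y]

/-- Namioka's theorem for compact metrizable `K`: the sections `f (x, ·)` lie in the separable
space `C(K, ℝ)`, so countably many balls of it cover them. -/
theorem exists_isUniformlyCloseOn_of_metrizable [BaireSpace X] {K : Type*} [TopologicalSpace K]
    [CompactSpace K] [TopologicalSpace.MetrizableSpace K] {f : X × K → ℝ}
    (hf₁ : ∀ y, QuasiContinuous fun x ↦ f (x, y)) (hf₂ : ∀ x, Continuous fun y ↦ f (x, y))
    {ε : ℝ} (hε : 0 < ε) {U : Set X} (hU : IsOpen U) (hne : U.Nonempty) :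
    ∃ V ⊆ U, IsOpen V ∧ V.Nonempty ∧ IsUniformlyCloseOn f V ε := by
  let F : X → C(K, ℝ) := fun x ↦ ⟨fun y ↦ f (x, y), hf₂ x⟩
  obtain ⟨d, hd⟩ := TopologicalSpace.exists_dense_seq C(K, ℝ)
  let E : ℕ → Set X := fun n ↦ {x | dist (F x) (d n) < ε / 2}
  have hcover : U ⊆ ⋃ n, E n := fun x _ ↦ mem_iUnion.2 (hd.exists_dist_lt (F x) (half_pos hε))
  obtain ⟨n, V, hVU, hV, hVne, hVE⟩ := exists_isOpen_subset_closure_of_subset_iUnion hU hne hcover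
  refine ⟨V, hVU, hV, hVne, fun x hx x' hx' y ↦ ?_⟩
  refine Real.dist_eq _ _ ▸ dist_le_of_quasiContinuousAt (fun x _ ↦ hf₁ y x) hV hVE
    (fun z hz z' hz' ↦ ?_) x hx x' hx'
  have hz : dist (F z) (d n) < ε / 2 := hz
  have hz' : dist (F z') (d n) < ε / 2 := hz'
  calc dist (f (z, y)) (f (z', y)) ≤ dist (F z) (F z') :=
        ContinuousMap.dist_apply_le_dist (f := F z) (g := F z') y
    _ ≤ dist (F z) (d n) + dist (F z') (d n) := dist_triangle_right _ _ _
    _ ≤ ε := by linarith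

end Namioka

section Valdivia

variable {Y T : Type*} [TopologicalSpace Y]

theorem exists_abs_sub_lt_of_eqOn [CompactSpace Y] {β : Type*} [TopologicalSpace β] [T2Space β]
    {e : Y → T → β} (hc : Continuous e) (hinj : Injective e) {A : ℕ → Set T} (hA : Monotone A)
    (hA_univ : ⋃ n, A n = univ) {g : Y → ℝ} (hg : Continuous g) {y w : ℕ → Y}
    (hyw : ∀ n, EqOn (e (y n)) (e (w n)) (A n)) {δ : ℝ} (hδ : 0 < δ) :
    ∃ n, |g (y n) - g (w n)| < δ := by
  by_contra! h
  obtain ⟨q, hq⟩ := exists_clusterPt_of_compactSpace (map (fun n ↦ (y n, w n)) atTop)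
  have hmem : ∀ {s : Set (Y × Y)}, IsClosed s → (∀ᶠ n in atTop, (y n, w n) ∈ s) → q ∈ s :=
    fun hs hev ↦ hs.closure_subset (hq.mem_closure_of_mem _ hev)
  have heq : e q.1 = e q.2 := funext fun t ↦ by
    obtain ⟨m, hm⟩ := mem_iUnion.1 (hA_univ ▸ mem_univ t)
    exact hmem (isClosed_eq ((continuous_apply t).comp (hc.comp continuous_fst))
      ((continuous_apply t).comp (hc.comp continuous_snd)))
      (eventually_atTop.2 ⟨m, fun n hn ↦ hyw n (hA hn hm)⟩)
  have hgap : δ ≤ |g q.1 - g q.2| := hmem (isClosed_le continuous_const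
    ((hg.comp continuous_fst).sub (hg.comp continuous_snd)).abs) (Eventually.of_forall h)
  rw [hinj heq, sub_self, abs_zero] at hgap
  exact hgap.not_gt hδ

variable {e : Y → T → ℝ}

theorem isClosed_setOf_support_subset (hc : Continuous e) (S : Set T) :
    IsClosed {y | support (e y) ⊆ S} := by
  have : {y | support (e y) ⊆ S} = ⋂ t ∈ Sᶜ, {y | e y t = 0} := by
    ext y
    simp only [mem_ofPred_eq, mem_iInter, mem_compl_iff, support_subset_iff']
  rw [this]
  exact isClosed_biInter fun t _ ↦ isClosed_eq ((continuous_apply t).comp hc) continuous_const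

theorem metrizableSpace_support_subset [CompactSpace Y] (hc : Continuous e) (hinj : Injective e)
    {S : Set T} (hS : S.Countable) :
    TopologicalSpace.MetrizableSpace {y | support (e y) ⊆ S} := by
  have := hS.to_subtype
  have := isCompact_iff_compactSpace.1 (isClosed_setOf_support_subset hc S).isCompact
  let π : {y | support (e y) ⊆ S} → S → ℝ := fun y t ↦ e y t
  have hπ : Continuous π :=
    continuous_pi fun t ↦ (continuous_apply t.1).comp (hc.comp continuous_subtype_val)
  refine (hπ.isClosedEmbedding fun y y' h ↦ Subtype.ext (hinj (funext fun t ↦ ?_))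
    ).isEmbedding.metrizableSpace
  by_cases ht : t ∈ S
  · exact congrFun h ⟨t, ht⟩
  · rw [notMem_support.1 fun h ↦ ht (y.2 h), notMem_support.1 fun h ↦ ht (y'.2 h)]

theorem exists_countable_restrict_mem_closure (hc : Continuous e) {D₀ : Set Y} (hD₀ : Dense D₀)
    {S : Set T} (hS : S.Countable) :
    ∃ D ⊆ D₀, D.Countable ∧
      ∀ y, (fun t : S ↦ e y t) ∈ closure ((fun d (t : S) ↦ e d t) '' D) := by
  have := hS.to_subtype
  let π : Y → S → ℝ := fun y t ↦ e y t
  have hπ : Continuous π := continuous_pi fun t ↦ (continuous_apply t.1).comp hc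
  obtain ⟨c, hcD, hc_count, hc_dense⟩ :=
    (TopologicalSpace.IsSeparable.of_separableSpace (π '' D₀)).exists_countable_dense_subset
  have := hc_count.to_subtype
  choose g hgD hgπ using fun a : c ↦ hcD a.2
  refine ⟨range g, range_subset_iff.2 hgD, countable_range g, fun y ↦ ?_⟩
  have hc_sub : c ⊆ π '' range g := fun a ha ↦ ⟨g ⟨a, ha⟩, mem_range_self _, hgπ _⟩
  refine closure_mono hc_sub (closure_minimal hc_dense isClosed_closure ?_)
  exact image_closure_subset_closure_image hπ ⟨y, hD₀.closure_eq ▸ mem_univ y, rfl⟩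

theorem exists_countable_indicator_mem_range [CompactSpace Y] (hc : Continuous e)
    (hdense : Dense {y | (support (e y)).Countable}) {S₀ : Set T} (hS₀ : S₀.Countable) :
    ∃ S, S₀ ⊆ S ∧ S.Countable ∧ ∀ y, S.indicator (e y) ∈ range e := by
  choose! D hD_sub hD_count hD using fun (S : Set T) (hS : S.Countable) ↦
    exists_countable_restrict_mem_closure hc hdense hS
  -- each stage absorbs the supports of countably many points approximating all of `e(Y)` on it
  let Sn : ℕ → Set T := fun n ↦ Nat.rec S₀ (fun _ S ↦ S ∪ ⋃ d ∈ D S, support (e d)) n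
  have hSn_count : ∀ n, (Sn n).Countable := by
    intro n
    induction n with
    | zero => exact hS₀
    | succ n ih => exact ih.union ((hD_count _ ih).biUnion fun d hd ↦ hD_sub _ ih hd)
  have hmono : Monotone Sn := monotone_nat_of_le_succ fun n ↦ subset_union_left
  refine ⟨⋃ n, Sn n, subset_iUnion Sn 0, countable_iUnion hSn_count, fun y ↦ ?_⟩
  rw [← (isCompact_range hc).isClosed.closure_eq, mem_closure_iff_nhds, nhds_pi]
  intro W hW
  obtain ⟨I, hI, N, hN, hIN⟩ := Filter.mem_pi.1 hW
  obtain ⟨k, hk⟩ : ∃ k, I ∩ ⋃ n, Sn n ⊆ Sn k := by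
    simpa using hmono.directed_le.exists_mem_subset_of_finset_subset_biUnion
      (s := (hI.inter_of_left _).toFinset) (by simp)
  have hnhds : (Subtype.val ⁻¹' I : Set ↥(Sn k)).pi (fun t ↦ N t.1) ∈ 𝓝 fun t : Sn k ↦ e y t.1 := by
    refine set_pi_mem_nhds (hI.preimage Subtype.val_injective.injOn) fun t _ ↦ ?_
    simpa [indicator_of_mem (mem_iUnion.2 ⟨k, t.2⟩)] using hN t.1
  obtain ⟨_, hdN, d, hdD, rfl⟩ := mem_closure_iff_nhds.1 (hD _ (hSn_count k) y) _ hnhds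
  refine ⟨e d, hIN fun t ht ↦ ?_, d, rfl⟩
  by_cases htS : t ∈ ⋃ n, Sn n
  · exact hdN ⟨t, hk ⟨ht, htS⟩⟩ ht
  · have hdt : e d t = 0 := notMem_support.1 fun h ↦
      htS (mem_iUnion.2 ⟨k + 1, Or.inr (mem_biUnion hdD h)⟩)
    simpa [hdt, indicator_of_notMem htS] using mem_of_mem_nhds (hN t)

end Valdivia

/-- A position in the game played against the failure of small oscillation on `U`: an open set
`W`, a countable set `S` of coordinates onto which `e(Y)` projects, and a point `y` together with
its projection `w` onto the coordinates of the previous position. -/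
structure OscillationGamePosition {X Y T : Type*} (e : Y → T → ℝ) (U : Set X) where
  W : Set X
  S : Set T
  y : Y
  w : Y
  W_subset : W ⊆ U
  countable : S.Countable
  indicator_mem_range : ∀ y, S.indicator (e y) ∈ range e

def OscillationGamePosition.Follows {X Y T : Type*} {e : Y → T → ℝ} {U : Set X}
    (f : X × Y → ℝ) (δ : ℝ) (s s' : OscillationGamePosition e U) : Prop :=
  s.S ⊆ s'.S ∧ support (e s'.y) ⊆ s'.S ∧ e s'.w = s.S.indicator (e s'.y) ∧
    ∀ x ∈ s'.W, δ ≤ |f (x, s'.y) - f (x, s'.w)|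

section ValdiviaKempisty

variable {X Y T : Type*} [TopologicalSpace X] [BaireSpace X] [TopologicalSpace Y]
  [CompactSpace Y] {e : Y → T → ℝ} {f : X × Y → ℝ}

theorem exists_isUniformlyCloseOn_support_subset (hc : Continuous e) (hinj : Injective e)
    (hf₁ : ∀ y, QuasiContinuous fun x ↦ f (x, y)) (hf₂ : ∀ x, Continuous fun y ↦ f (x, y))
    {S : Set T} (hS : S.Countable) {ε : ℝ} (hε : 0 < ε) {U : Set X} (hU : IsOpen U)
    (hne : U.Nonempty) :
    ∃ V ⊆ U, IsOpen V ∧ V.Nonempty ∧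
      ∀ x ∈ V, ∀ x' ∈ V, ∀ y, support (e y) ⊆ S → |f (x, y) - f (x', y)| ≤ ε := by
  have := isCompact_iff_compactSpace.1 (isClosed_setOf_support_subset hc S).isCompact
  have := metrizableSpace_support_subset hc hinj hS
  obtain ⟨V, hVU, hV, hVne, hclose⟩ := exists_isUniformlyCloseOn_of_metrizable
    (K := {y | support (e y) ⊆ S}) (f := fun p ↦ f (p.1, p.2)) (fun y ↦ hf₁ y)
    (fun x ↦ (hf₂ x).comp continuous_subtype_val) hε hU hne
  exact ⟨V, hVU, hV, hVne, fun x hx x' hx' y hy ↦ hclose x hx x' hx' ⟨y, hy⟩⟩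

theorem OscillationGamePosition.exists_follows (he : IsEmbedding e)
    (hdense : Dense {y | (support (e y)).Countable})
    (hf₁ : ∀ y, QuasiContinuous fun x ↦ f (x, y)) (hf₂ : ∀ x, Continuous fun y ↦ f (x, y))
    {ε : ℝ} (hε : 0 < ε) {U : Set X}
    (hbad : ∀ V ⊆ U, IsOpen V → V.Nonempty → ¬ IsUniformlyCloseOn f V ε)
    (s : OscillationGamePosition e U) {V : Set X} (hV : IsOpen V) (hVne : V.Nonempty)
    (hVs : V ⊆ s.W) :
    ∃ s', s.Follows f (ε / 4) s' ∧ IsOpen s'.W ∧ s'.W.Nonempty ∧ s'.W ⊆ V := by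
  obtain ⟨V₁, hV₁V, hV₁, hV₁ne, hflat⟩ := exists_isUniformlyCloseOn_support_subset he.continuous
    he.injective hf₁ hf₂ s.countable (by positivity : 0 < ε / 8) hV hVne
  obtain ⟨x, hx, x', hx', y₀, hy₀⟩ : ∃ x ∈ V₁, ∃ x' ∈ V₁, ∃ y, ε < |f (x, y) - f (x', y)| := by
    simpa [IsUniformlyCloseOn] using hbad V₁ (hV₁V.trans (hVs.trans s.W_subset)) hV₁ hV₁ne
  obtain ⟨y, hy, hy_count⟩ := hdense.inter_open_nonempty {y | ε < |f (x, y) - f (x', y)|}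
    (isOpen_lt continuous_const ((hf₂ x).sub (hf₂ x')).abs) ⟨y₀, hy₀⟩
  obtain ⟨w, hw⟩ := s.indicator_mem_range y
  obtain ⟨G, hGV₁, hG, hGne, hGsep⟩ := exists_isOpen_forall_le_abs_sub hf₁ hε hV₁
    (fun x hx x' hx' ↦ hflat x hx x' hx' w (hw ▸ support_indicator_subset)) hx hx' hy
  obtain ⟨S', hSS', hS'_count, hS'⟩ := exists_countable_indicator_mem_range he.continuous hdense
    (s.countable.union hy_count)
  exact ⟨⟨G, S', y, w, hGV₁.trans (hV₁V.trans (hVs.trans s.W_subset)), hS'_count, hS'⟩,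
    ⟨subset_union_left.trans hSS', subset_union_right.trans hSS', hw, hGsep⟩,
    hG, hGne, hGV₁.trans hV₁V⟩

theorem exists_isUniformlyCloseOn_of_valdivia (he : IsEmbedding e)
    (hdense : Dense {y | (support (e y)).Countable})
    (hf₁ : ∀ y, QuasiContinuous fun x ↦ f (x, y)) (hf₂ : ∀ x, Continuous fun y ↦ f (x, y))
    {ε : ℝ} (hε : 0 < ε) {U : Set X} (hU : IsOpen U) (hne : U.Nonempty) :
    ∃ V ⊆ U, IsOpen V ∧ V.Nonempty ∧ IsUniformlyCloseOn f V ε := by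
  by_contra! hbad
  obtain ⟨y₀⟩ : Nonempty Y := by
    by_contra hY
    exact hbad U subset_rfl hU hne fun _ _ _ _ y ↦ (hY ⟨y⟩).elim
  obtain ⟨S₀, -, hS₀_count, hS₀⟩ :=
    exists_countable_indicator_mem_range he.continuous hdense countable_empty
  obtain ⟨p, -, hp, x, hx⟩ := BaireSpace.exists_play_nonempty_iInter
    OscillationGamePosition.W (OscillationGamePosition.Follows f (ε / 4))
    (fun s V hV hVne hVs ↦ s.exists_follows he hdense hf₁ hf₂ hε hbad hV hVne hVs)
    (s₀ := ⟨U, S₀, y₀, y₀, subset_rfl, hS₀_count, hS₀⟩) hU hne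
  have hmono : Monotone fun n ↦ (p n).S := monotone_nat_of_le_succ fun n ↦ (hp n).1
  let Sω := ⋃ n, (p n).S
  have hagree : ∀ n, EqOn (e (p (n + 1)).y) (e (p (n + 1)).w) ((p n).S ∪ Sωᶜ) := by
    intro n t ht
    obtain ⟨-, hy_supp, hw, -⟩ := hp n
    rw [hw]
    rcases ht with ht | ht
    · exact (indicator_of_mem ht _).symm
    · rw [indicator_of_notMem fun h ↦ ht (mem_iUnion.2 ⟨n, h⟩),
        notMem_support.1 fun h ↦ ht (mem_iUnion.2 ⟨n + 1, hy_supp h⟩)]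
  obtain ⟨n, hn⟩ := exists_abs_sub_lt_of_eqOn he.continuous he.injective
    (fun m n h ↦ union_subset_union_left _ (hmono h))
    (by rw [← iUnion_union]; exact union_compl_self Sω) (hf₂ x) hagree (by positivity : 0 < ε / 4)
  exact (hn.trans_le ((hp n).2.2.2 x (mem_iInter.1 hx (n + 1)))).false

end ValdiviaKempisty

theorem valdivia_isKempisty_general {X Y T : Type*} [TopologicalSpace X] [BaireSpace X]
    [TopologicalSpace Y] [CompactSpace Y]
    (e : Y → (T → ℝ)) (he : Topology.IsEmbedding e)
    (hsigma : Dense {y : Y | {t : T | e y t ≠ 0}.Countable})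
    (f : X × Y → ℝ)
    (hf1 : ∀ y : Y, QuasiContinuous fun x : X => f (x, y))
    (hf2 : ∀ x : X, Continuous fun y => f (x, y)) :
    NamiokaProperty f :=
  namiokaProperty_of_exists_isUniformlyCloseOn hf2 fun _ hε _ hU hne ↦
    exists_isUniformlyCloseOn_of_valdivia he hsigma hf1 hf2 hε hU hne

/-- Corollary 3.5: every Valdivia compact is a Kempisty space. -/
theorem valdivia_isKempisty {X Y T : Type*} [TopologicalSpace X] [BaireSpace X]
    [TopologicalSpace Y] [CompactSpace Y]
    (e : Y → (T → ℝ)) (he : Topology.IsEmbedding e)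
    (hcube : ∀ y t, e y t ∈ Set.Icc (0 : ℝ) 1)
    (hsigma : Dense {y : Y | {t : T | e y t ≠ 0}.Countable})
    (f : X × Y → ℝ)
    (hf1 : ∀ y : Y, QuasiContinuous fun x : X => f (x, y))
    (hf2 : ∀ x : X, Continuous fun y => f (x, y)) :
    NamiokaProperty f :=
  valdivia_isKempisty_general e he hsigma f hf1 hf2
end

section
/- If Y ∩ Σ is dense in a compact subspace Y of [0,1]^T, where Σ is the set of points with countable support, then Y ∩ Σ is countably compact, hence a dense Baire subspace of Y; consequently, the intersection of any dense G_δ subset of Y with Y ∩ Σ is dense in Y. -/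
/-! Countably many points of `Y ∩ Σ` have their supports inside one countable set `C`, and the
points of `Y` supported in `C` form a closed, hence compact, subset of `Y` contained in `Σ`. So
every sequence of `Y ∩ Σ` clusters in `Y ∩ Σ`: this subspace is countably compact. Being also
regular it is a Baire space, since nested closures of nonempty open sets cannot have empty
intersection; and a dense `Gδ` subset of `Y` traces a dense `Gδ` subset on the dense Baire
subspace `Y ∩ Σ`. -/

/-- A space is countably compact: every countable open cover has a finite subcover. -/
def CountablyCompact (α : Type*) [TopologicalSpace α] : Prop :=
  ∀ U : ℕ → Set α, (∀ n, IsOpen (U n)) → (⋃ n, U n) = Set.univ →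
    ∃ F : Finset ℕ, (⋃ n ∈ F, U n) = Set.univ

open Set Function

section CountablyCompactSpace

variable {X : Type*} [TopologicalSpace X]

theorem countablyCompact_iff_countablyCompactSpace :
    CountablyCompact X ↔ CountablyCompactSpace X := by
  simp only [CountablyCompact, ← isCountablyCompact_univ_iff,
    isCountablyCompact_iff_countable_open_cover, univ_subset_iff]

theorem CountablyCompactSpace.of_countable_subset_isCompact
    (h : ∀ s : Set X, s.Countable → ∃ K, IsCompact K ∧ s ⊆ K) : CountablyCompactSpace X := by
  refine ⟨IsCountablyCompact.of_seq_clusterPt fun x _ => ?_⟩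
  obtain ⟨K, hK, hxK⟩ := h (range x) (countable_range x)
  obtain ⟨a, -, ha⟩ := hK.isCountablyCompact.seq_clusterPt x
    (Filter.Eventually.of_forall fun n => hxK (mem_range_self n))
  exact ⟨a, mem_univ a, ha⟩

theorem CountablyCompactSpace.of_countable_subset_isClosed [CompactSpace X] {S : Set X}
    (h : ∀ s ⊆ S, s.Countable → ∃ A, IsClosed A ∧ s ⊆ A ∧ A ⊆ S) :
    CountablyCompactSpace S := by
  refine .of_countable_subset_isCompact fun s hs => ?_
  obtain ⟨A, hA, hsA, hAS⟩ := h _ (Subtype.coe_image_subset S s) (hs.image _)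
  refine ⟨(↑) ⁻¹' A, ?_, fun x hx => hsA (mem_image_of_mem _ hx)⟩
  rw [Topology.IsEmbedding.subtypeVal.isCompact_iff, Subtype.image_preimage_coe,
    inter_eq_right.2 hAS]
  exact hA.isCompact

theorem CountablyCompactSpace.nonempty_iInter_of_antitone [CountablyCompactSpace X]
    {K : ℕ → Set X} (hK : Antitone K) (hKc : ∀ n, IsClosed (K n)) (hKne : ∀ n, (K n).Nonempty) :
    (⋂ n, K n).Nonempty := by
  by_contra! hempty
  obtain ⟨n, hn⟩ := isCountablyCompact_univ.elim_directed_cover (fun n => (K n)ᶜ)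
    (fun n => (hKc n).isOpen_compl) (by simp [← compl_iInter, hempty])
    (show Monotone fun n => (K n)ᶜ from fun _ _ hmn => compl_subset_compl.2 (hK hmn)).directed_le
  obtain ⟨x, hx⟩ := hKne n
  exact hn (mem_univ x) hx

theorem IsOpen.exists_isOpen_nonempty_closure_subset [RegularSpace X] {W : Set X}
    (hW : IsOpen W) (hWne : W.Nonempty) :
    ∃ V, IsOpen V ∧ V.Nonempty ∧ closure V ⊆ W := by
  obtain ⟨x, hx⟩ := hWne
  obtain ⟨t, ht, htc, htW⟩ := exists_mem_nhds_isClosed_subset (hW.mem_nhds hx)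
  exact ⟨interior t, isOpen_interior, ⟨x, mem_interior_iff_mem_nhds.2 ht⟩,
    (closure_minimal interior_subset htc).trans htW⟩

instance (priority := 100) BaireSpace.of_countablyCompactSpace [RegularSpace X]
    [CountablyCompactSpace X] : BaireSpace X := by
  refine ⟨fun f ho hd => dense_iff_inter_open.2 fun U hU hUne => ?_⟩
  have step : ∀ (n : ℕ) (W : {W : Set X // IsOpen W ∧ W.Nonempty}),
      ∃ W' : {W : Set X // IsOpen W ∧ W.Nonempty}, closure W'.1 ⊆ W.1 ∩ f n := fun n W =>
    let ⟨V, hVo, hVne, hV⟩ := (W.2.1.inter (ho n)).exists_isOpen_nonempty_closure_subset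
      ((hd n).inter_open_nonempty W.1 W.2.1 W.2.2)
    ⟨⟨V, hVo, hVne⟩, hV⟩
  choose next hnext using step
  let V : ℕ → {W : Set X // IsOpen W ∧ W.Nonempty} := fun n => Nat.rec ⟨U, hU, hUne⟩ next n
  obtain ⟨x, hx⟩ := CountablyCompactSpace.nonempty_iInter_of_antitone
    (K := fun n => closure (V (n + 1)).1)
    (antitone_nat_of_succ_le fun n => (hnext _ _).trans (inter_subset_left.trans subset_closure))
    (fun _ => isClosed_closure) (fun n => (V (n + 1)).2.2.closure)
  rw [mem_iInter] at hx
  exact ⟨x, (hnext 0 _ (hx 0)).1, mem_iInter.2 fun n => (hnext n _ (hx n)).2⟩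

end CountablyCompactSpace

section DenseSubspace

variable {X : Type*} [TopologicalSpace X] {S U G : Set X}

theorem Dense.dense_preimage_val_of_isOpen (hS : Dense S) (hU : Dense U) (hUo : IsOpen U) :
    Dense (((↑) : S → X) ⁻¹' U) := by
  rw [Subtype.dense_iff, Subtype.image_preimage_coe, (hS.inter_of_isOpen_right hU hUo).closure_eq]
  exact subset_univ S

theorem Dense.inter_of_isGδ [BaireSpace S] (hS : Dense S) (hG : Dense G) (hGδ : IsGδ G) :
    Dense (G ∩ S) := by
  obtain ⟨f, hfo, rfl⟩ := hGδ.eq_iInter_nat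
  have hpre : Dense (((↑) : S → X) ⁻¹' ⋂ n, f n) := by
    rw [preimage_iInter]
    exact dense_iInter_of_isOpen_nat (fun n => (hfo n).preimage continuous_subtype_val)
      fun n => hS.dense_preimage_val_of_isOpen (hG.mono (iInter_subset f n)) (hfo n)
  rw [Subtype.dense_iff, Subtype.image_preimage_coe] at hpre
  exact inter_comm S _ ▸ (hS.mono hpre).of_closure

end DenseSubspace

theorem isClosed_setOf_support_subset_s7 {T M : Type*} [TopologicalSpace M] [Zero M] [T1Space M]
    (C : Set T) : IsClosed {x : T → M | support x ⊆ C} := by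
  simp only [support_subset_iff', ofPred_forall]
  exact isClosed_biInter fun t _ => isClosed_singleton.preimage (continuous_apply t)

theorem countablyCompactSpace_countable_support {T M : Type*} [TopologicalSpace M] [Zero M]
    [T1Space M] {Y : Set (T → M)} (hY : IsCompact Y) :
    CountablyCompactSpace {y : Y | (support (y : T → M)).Countable} := by
  have := isCompact_iff_compactSpace.1 hY
  refine .of_countable_subset_isClosed fun s hsS hs => ?_
  refine ⟨Subtype.val ⁻¹' {x : T → M | support x ⊆ ⋃ z ∈ s, support (z : T → M)},
    (isClosed_setOf_support_subset_s7 _).preimage continuous_subtype_val,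
    fun y hy => subset_biUnion_of_mem (u := fun z : Y => support (z : T → M)) hy,
    fun y hy => (hs.biUnion fun z hz => hsS hz).mono hy⟩

theorem sigma_part_countablyCompact_baire_dense_general {T : Type*} (Y : Set (T → ℝ))
    (hYcomp : IsCompact Y)
    (S : Set Y) (hS : S = {y : Y | {t : T | (y : T → ℝ) t ≠ 0}.Countable})
    (hSdense : Dense S) :
    CountablyCompact S ∧ BaireSpace S ∧
      ∀ G : Set Y, Dense G → IsGδ G → Dense (G ∩ S) := by
  have : CountablyCompactSpace S := by
    rw [hS]
    exact countablyCompactSpace_countable_support hYcomp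
  exact ⟨countablyCompact_iff_countablyCompactSpace.2 this, inferInstance,
    fun G hG hGδ => hSdense.inter_of_isGδ hG hGδ⟩

/-- if the set `S` of points of countable support in a compact `Y ⊆ [0,1]^T` is
dense in `Y`, then `S` is countably compact, a dense Baire subspace of `Y`, and meets every
dense `Gδ` subset of `Y` in a dense set. -/
theorem sigma_part_countablyCompact_baire_dense {T : Type*} (Y : Set (T → ℝ))
    (hYcube : ∀ x ∈ Y, ∀ t, x t ∈ Set.Icc (0 : ℝ) 1)
    (hYcomp : IsCompact Y)
    (S : Set Y) (hS : S = {y : Y | {t : T | (y : T → ℝ) t ≠ 0}.Countable})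
    (hSdense : Dense S) :
    CountablyCompact S ∧ BaireSpace S ∧
      ∀ G : Set Y, Dense G → IsGδ G → Dense (G ∩ S) :=
  sigma_part_countablyCompact_baire_dense_general Y hYcomp S hS hSdense
end

section
/- Let X be a Baire space, Y and Z compact spaces, and f : X × (Y × Z) → ℝ continuous in the second variable (jointly in (y,z)). Suppose that for every y ∈ Y the function f_y : X × Z → ℝ, f_y(x,z) = f(x,y,z), has the Namioka property. Then for every ε > 0 and every nonempty open U ⊆ X there exist continuous functions b₁, …, b_n ∈ C(Z) and a nonempty open U₀ ⊆ U such that for every y ∈ Y there is a dense subset A ⊆ U₀ such that for each x ∈ A there exists k ∈ {1, …, n} with |f(x,y,z) − b_k(z)| ≤ ε for all z ∈ Z. -/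
open Topology

/- Write `F x y := f (x, y, ·) ∈ C(Z)`. It suffices to find a nonempty open `V ⊆ U` and a point
`x₀` such that for every `y` the points `x ∈ V` with `F x y` within `ε/2` of the compact set
`F x₀ (Y)` are dense in `V`: a finite `ε/2`-net of `F x₀ (Y)` is then the required `b`.
If there were no such `V` and `x₀`, the second player of the Banach–Mazur game in `U` could play
as follows: in the move `A` pick a point `xₙ` at which `F · y'` is continuous for the finitely many
`y'` used so far, shrink `A` so that these `F · y'` stay `ε/6`-close to `F xₙ y'`, and answer a set
on which `F · yₙ` stays `ε/2`-far from `F xₙ (Y)`. Since `X` is Baire, the answers have a common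
point `x`. Near a cluster point of `(yₙ)` there are `m < n` with `F x yₘ` and `F x yₙ` close,
while `F x yₘ` is close to `F xₙ yₘ`, contradicting the choice of `yₙ`. -/

open Set Filter

theorem ContinuousMap.continuousAt_of_forall_continuousAt_uncurry {X Z E : Type*}
    [TopologicalSpace X] [TopologicalSpace Z] [CompactSpace Z] [PseudoMetricSpace E]
    {F : X → C(Z, E)} {x₀ : X} (hF : ∀ z, ContinuousAt (fun q : X × Z => F q.1 q.2) (x₀, z)) :
    ContinuousAt F x₀ := by
  refine Metric.tendsto_nhds.2 fun δ hδ => ?_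
  have hpt : ∀ z ∈ univ, ∀ᶠ q : X × Z in 𝓝 (x₀, z), dist (F q.1 q.2) (F x₀ q.2) < δ / 2 := by
    intro z _
    have h0 : dist (F x₀ z) (F x₀ z) < δ / 2 := by simpa using half_pos hδ
    exact ((hF z).dist ((F x₀).continuous.comp continuous_snd).continuousAt).eventually
      (gt_mem_nhds h0)
  filter_upwards [isCompact_univ.eventually_forall_of_forall_eventually
    (P := fun x z => dist (F x z) (F x₀ z) < δ / 2) hpt] with x hx
  exact ((ContinuousMap.dist_le (half_pos hδ).le).2 fun z => (hx z trivial).le).trans_lt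
    (half_lt_self hδ)

theorem IsCompact.exists_fin_forall_exists_dist_lt {E : Type*} [PseudoMetricSpace E] {K : Set E}
    (hK : IsCompact K) {δ : ℝ} (hδ : 0 < δ) :
    ∃ (n : ℕ) (b : Fin n → E), ∀ e ∈ K, ∃ k, dist e (b k) < δ := by
  obtain ⟨t, -, ht, hcover⟩ := finite_cover_balls_of_compact hK hδ
  obtain ⟨n, b, rfl⟩ := ht.fin_embedding
  refine ⟨n, b, fun e he => ?_⟩
  obtain ⟨_, ⟨k, rfl⟩, hk⟩ := mem_iUnion₂.1 (hcover he)
  exact ⟨k, hk⟩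

theorem exists_pairwiseDisjoint_interior_subset_closure {ι X : Type*} [TopologicalSpace X]
    {R : Set X} {C : Set ι} {reg : ι → Set X}
    (hC : ∀ B, IsOpen B → B.Nonempty → B ⊆ R → ∃ i ∈ C, (reg i).Nonempty ∧ reg i ⊆ B) :
    ∃ M ⊆ C, M.PairwiseDisjoint reg ∧ interior R ⊆ closure (⋃ i ∈ M, reg i) := by
  obtain ⟨M, hM⟩ : ∃ M, Maximal (· ∈ {M | M ⊆ C ∧ M.PairwiseDisjoint reg}) M :=
    zorn_subset _ fun c hc hchain => ⟨⋃₀ c, ⟨sUnion_subset fun M hM => (hc hM).1,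
      (hchain.pairwiseDisjoint_sUnion reg).2 fun M hM => (hc hM).2⟩,
      fun M hM => subset_sUnion_of_mem hM⟩
  refine ⟨M, hM.prop.1, hM.prop.2, fun x hx => mem_closure_iff.2 fun o ho hxo => ?_⟩
  by_contra hmiss
  obtain ⟨i, hiC, ⟨a, ha⟩, hio⟩ := hC (o ∩ interior R) (ho.inter isOpen_interior) ⟨x, hxo, hx⟩
    (inter_subset_right.trans interior_subset)
  have hdisj : ∀ j ∈ M, Disjoint (reg i) (reg j) := fun j hj =>
    disjoint_left.2 fun b hbi hbj => hmiss ⟨b, (hio hbi).1, mem_biUnion hj hbj⟩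
  have hiM : i ∈ M := hM.mem_of_prop_insert
    ⟨insert_subset hiC hM.prop.1, hM.prop.2.insert fun j hj _ => hdisj j hj⟩
  exact hmiss ⟨a, (hio ha).1, mem_biUnion hiM ha⟩

theorem exists_mem_inter_iInter_of_subset_closure {X : Type*} [TopologicalSpace X]
    [BaireSpace X] {U : Set X} (hU : IsOpen U) (hUne : U.Nonempty) {V : ℕ → Set X}
    (hV : ∀ n, IsOpen (V n)) (hUV : ∀ n, U ⊆ closure (V n)) : (U ∩ ⋂ n, V n).Nonempty := by
  have hdense : Dense (⋂ n, V n ∪ (closure U)ᶜ) := by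
    refine dense_iInter_of_isOpen (fun n => (hV n).union isClosed_closure.isOpen_compl)
      fun n x => ?_
    by_cases hx : x ∈ closure U
    · exact closure_mono subset_union_left (closure_minimal (hUV n) isClosed_closure hx)
    · exact subset_closure (Or.inr hx)
  obtain ⟨x, hx, hxD⟩ := hdense.inter_open_nonempty U hU hUne
  refine ⟨x, hx, mem_iInter.2 fun n => ?_⟩
  exact (mem_iInter.1 hxD n).resolve_right (not_not.2 (subset_closure hx))

section BanachMazur

/- The Banach–Mazur game: the players alternately choose nonempty open sets, each inside the
previous one. A strategy of the second player is coded as a state machine: in state `s` the first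
player may choose any legal move `A` inside `ρ s`, the new state is `τ s A`, and `ρ (τ s A)` is
the answer. -/

variable {X S : Type*} [TopologicalSpace X] {ρ : S → Set X} {τ : S → Set X → S}

def IsLegalMove (R A : Set X) : Prop :=
  IsOpen A ∧ A.Nonempty ∧ A ⊆ R

def strategyTree (τ : S → Set X → S) (M : S → Set (Set X)) (s₀ : S) : ℕ → Set S
  | 0 => {s₀}
  | n + 1 => ⋃ s ∈ strategyTree τ M s₀ n, τ s '' M s

variable {M : S → Set (Set X)} {s₀ : S}

theorem isOpen_of_mem_strategyTree (hτ : ∀ s A, IsLegalMove (ρ s) A → IsLegalMove A (ρ (τ s A)))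
    (hM : ∀ s, ∀ A ∈ M s, IsLegalMove (ρ s) A) (h₀ : IsOpen (ρ s₀)) :
    ∀ {n s}, s ∈ strategyTree τ M s₀ n → IsOpen (ρ s)
  | 0, s, hs => by rwa [mem_singleton_iff.1 hs]
  | n + 1, s, hs => by
    obtain ⟨p, -, A, hA, rfl⟩ := mem_iUnion₂.1 hs
    exact (hτ p A (hM p A hA)).1

theorem pairwiseDisjoint_strategyTree
    (hτ : ∀ s A, IsLegalMove (ρ s) A → IsLegalMove A (ρ (τ s A)))
    (hM : ∀ s, ∀ A ∈ M s, IsLegalMove (ρ s) A)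
    (hdisj : ∀ s, (M s).PairwiseDisjoint fun A => ρ (τ s A)) :
    ∀ n, (strategyTree τ M s₀ n).PairwiseDisjoint ρ
  | 0 => pairwiseDisjoint_singleton _ _
  | n + 1 => by
    refine PairwiseDisjoint.biUnion
      ((pairwiseDisjoint_strategyTree hτ hM hdisj n).mono fun s => ?_) fun s _ => ?_
    · refine iSup₂_le ?_
      rintro _ ⟨A, hA, rfl⟩
      exact (hτ s A (hM s A hA)).2.2.trans (hM s A hA).2.2
    · rintro _ ⟨A, hA, rfl⟩ _ ⟨B, hB, rfl⟩ hne
      exact hdisj s hA hB (ne_of_apply_ne _ hne)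

theorem subset_closure_strategyTree
    (hτ : ∀ s A, IsLegalMove (ρ s) A → IsLegalMove A (ρ (τ s A)))
    (hM : ∀ s, ∀ A ∈ M s, IsLegalMove (ρ s) A) (h₀ : IsOpen (ρ s₀))
    (hdense : ∀ s, interior (ρ s) ⊆ closure (⋃ A ∈ M s, ρ (τ s A))) :
    ∀ n, ρ s₀ ⊆ closure (⋃ s ∈ strategyTree τ M s₀ n, ρ s)
  | 0 => by simpa [strategyTree] using subset_closure
  | n + 1 => by
    refine (subset_closure_strategyTree hτ hM h₀ hdense n).trans
      (closure_minimal (iUnion₂_subset fun s hs => ?_) isClosed_closure)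
    rw [← (isOpen_of_mem_strategyTree hτ hM h₀ hs).interior_eq]
    refine (hdense s).trans (closure_mono (iUnion₂_subset fun A hA => ?_))
    exact subset_biUnion_of_mem (u := ρ) (mem_biUnion hs (mem_image_of_mem _ hA))

/- Oxtoby: the levels of a tree of maximal disjoint families of answers are dense open sets, and
a point of their intersection selects a single branch. -/
theorem exists_play_forall_mem_of_baireSpace [BaireSpace X]
    (hτ : ∀ s A, IsLegalMove (ρ s) A → IsLegalMove A (ρ (τ s A))) (h₀ : IsOpen (ρ s₀))
    (h₀' : (ρ s₀).Nonempty) :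
    ∃ s : ℕ → S, s 0 = s₀ ∧ (∀ n, ∃ A, IsLegalMove (ρ (s n)) A ∧ s (n + 1) = τ (s n) A) ∧
      ∃ x, ∀ n, x ∈ ρ (s n) := by
  choose M hM hdisj hdense using fun s => exists_pairwiseDisjoint_interior_subset_closure
    (R := ρ s) (C := {A | IsLegalMove (ρ s) A}) (reg := fun A => ρ (τ s A))
    fun B hB hBne hBR => ⟨B, ⟨hB, hBne, hBR⟩, (hτ s B ⟨hB, hBne, hBR⟩).2⟩
  set L := strategyTree τ M s₀
  obtain ⟨x, hx₀, hx⟩ := exists_mem_inter_iInter_of_subset_closure h₀ h₀'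
    (fun n => isOpen_biUnion fun _ => isOpen_of_mem_strategyTree hτ hM h₀)
    (subset_closure_strategyTree hτ hM h₀ hdense)
  choose s hsL hxs using fun n => mem_iUnion₂.1 (mem_iInter.1 hx n)
  have huniq : ∀ n t, t ∈ L n → x ∈ ρ t → t = s n := fun n t ht hxt =>
    (pairwiseDisjoint_strategyTree hτ hM hdisj n).elim ht (hsL n)
      (not_disjoint_iff.2 ⟨x, hxt, hxs n⟩)
  refine ⟨s, (huniq 0 s₀ rfl hx₀).symm, fun n => ?_, x, hxs⟩
  obtain ⟨p, hp, A, hA, hpA⟩ := mem_iUnion₂.1 (hsL (n + 1))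
  have hxA : x ∈ A := (hτ p A (hM p hA)).2.2 (hpA ▸ hxs (n + 1))
  obtain rfl := huniq n p hp ((hM p hA).2.2 hxA)
  exact ⟨A, hM _ hA, hpA.symm⟩

end BanachMazur

section Namioka

variable {X Y E : Type*} [TopologicalSpace X] [TopologicalSpace Y] [PseudoMetricSpace E]

theorem exists_lt_dist_lt_of_forall_dist_le [CompactSpace Y] {g : Y → E} (hg : Continuous g)
    (h : ℕ → Y → E) (y : ℕ → Y) {δ : ℝ} (hδ : 0 < δ)
    (hclose : ∀ m n, m < n → dist (g (y m)) (h n (y m)) ≤ δ / 3) :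
    ∃ m n, m < n ∧ dist (g (y n)) (h n (y m)) < δ := by
  obtain ⟨y₀, hy₀⟩ := exists_clusterPt_of_compactSpace (map y atTop)
  have hfreq : ∃ᶠ n in atTop, dist (g (y n)) (g y₀) < δ / 3 :=
    mapClusterPt_iff_frequently.1 hy₀ _
      (hg.continuousAt.preimage_mem_nhds (Metric.ball_mem_nhds _ (by positivity)))
  obtain ⟨m, hm⟩ := hfreq.exists
  obtain ⟨n, hn, hmn⟩ := (hfreq.and_eventually (eventually_gt_atTop m)).exists
  refine ⟨m, n, hmn, ?_⟩
  calc dist (g (y n)) (h n (y m))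
      ≤ dist (g (y n)) (g y₀) + dist (g y₀) (g (y m)) + dist (g (y m)) (h n (y m)) :=
        dist_triangle4 _ _ _ _
    _ < δ / 3 + δ / 3 + δ / 3 :=
        add_lt_add_of_lt_of_le (add_lt_add hn (dist_comm (g y₀) _ ▸ hm)) (hclose m n hmn)
    _ = δ := by ring

theorem exists_answer_far_of_not_subset_closure [BaireSpace X] {F : X → C(Y, E)} {D : Y → Set X}
    (hDdense : ∀ y, Dense (D y)) (hDGδ : ∀ y, IsGδ (D y))
    (hDcont : ∀ y, ∀ x ∈ D y, ContinuousAt (fun x => F x y) x) {δ : ℝ} (hδ : 0 < δ) {U : Set X}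
    (hnot : ∀ V, IsLegalMove U V → ∀ x₀, ∃ y,
      ¬ V ⊆ closure {x ∈ V | ∃ y', dist (F x y) (F x₀ y') ≤ δ})
    {A : Set X} (hA : IsLegalMove U A) (ys : List Y) :
    ∃ x y W, IsLegalMove A W ∧ (∀ x' ∈ W, ∀ y' ∈ ys, dist (F x' y') (F x y') < δ / 3) ∧
      ∀ x' ∈ W, ∀ y', δ < dist (F x' y) (F x y') := by
  obtain ⟨hAo, hAne, hAU⟩ := hA
  obtain ⟨x, hxA, hxD⟩ := (dense_biInter_of_Gδ (fun y _ => hDGδ y) ys.finite_toSet.countable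
    fun y _ => hDdense y).inter_open_nonempty A hAo hAne
  have hnear : ∀ᶠ x' in 𝓝 x, x' ∈ A ∧ ∀ y' ∈ ys, dist (F x' y') (F x y') < δ / 3 :=
    Eventually.and (hAo.mem_nhds hxA) <| (eventually_all_finite ys.finite_toSet).2 fun y' hy' =>
      (hDcont y' x (mem_iInter₂.1 hxD y' hy')).eventually
        (Metric.ball_mem_nhds _ (by positivity))
  obtain ⟨V, hVnear, hVo, hxV⟩ := mem_nhds_iff.1 hnear
  obtain ⟨y, hy⟩ := hnot V ⟨hVo, ⟨x, hxV⟩, fun v hv => hAU (hVnear hv).1⟩ x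
  obtain ⟨v, hvV, hv⟩ := not_subset.1 hy
  obtain ⟨o, ho, hvo, hoS⟩ : ∃ o, IsOpen o ∧ v ∈ o ∧
      ∀ x' ∈ o, x' ∈ V → ∀ y', δ < dist (F x' y) (F x y') := by
    simpa [mem_closure_iff, Set.Nonempty, not_exists] using hv
  refine ⟨x, y, o ∩ V, ⟨ho.inter hVo, ⟨v, hvo, hvV⟩, fun x' hx' => (hVnear hx'.2).1⟩,
    fun x' hx' => (hVnear hx'.2).2, fun x' hx' => hoS x' hx'.1 hx'.2⟩

theorem exists_seq_of_forall_not_subset_closure [BaireSpace X] {F : X → C(Y, E)}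
    (hF : ∀ y, ∃ D : Set X, Dense D ∧ IsGδ D ∧ ∀ x ∈ D, ContinuousAt (fun x => F x y) x)
    {δ : ℝ} (hδ : 0 < δ) {U : Set X} (hU : IsOpen U) (hUne : U.Nonempty)
    (hnot : ∀ V, IsLegalMove U V → ∀ x₀, ∃ y,
      ¬ V ⊆ closure {x ∈ V | ∃ y', dist (F x y) (F x₀ y') ≤ δ}) :
    ∃ (x : X) (xs : ℕ → X) (ys : ℕ → Y),
      (∀ m n, m < n → dist (F x (ys m)) (F (xs n) (ys m)) ≤ δ / 3) ∧
        ∀ n y', δ < dist (F x (ys n)) (F (xs n) y') := by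
  choose D hDdense hDGδ hDcont using hF
  have : Nonempty X := hUne.to_subtype.map Subtype.val
  have : Nonempty Y := ⟨(hnot U ⟨hU, hUne, subset_rfl⟩ hUne.some).choose⟩
  choose! px py W hW hnear hfar using fun (A : Set X) (ys : List Y) (hA : IsLegalMove U A) =>
    exists_answer_far_of_not_subset_closure hDdense hDGδ hDcont hδ hnot hA ys
  -- The state remembers the current answer and the points `y` used so far.
  let ρ : Set X × List Y → Set X := fun s => s.1 ∩ U
  let τ : Set X × List Y → Set X → Set X × List Y := fun s A => (W A s.2, py A s.2 :: s.2)
  have hτ : ∀ s A, IsLegalMove (ρ s) A → IsLegalMove A (ρ (τ s A)) := by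
    rintro ⟨R, ys⟩ A ⟨hAo, hAne, hAR⟩
    have hAU : IsLegalMove U A := ⟨hAo, hAne, hAR.trans inter_subset_right⟩
    show IsLegalMove A (W A ys ∩ U)
    rw [inter_eq_left.2 ((hW A ys hAU).2.2.trans hAU.2.2)]
    exact hW A ys hAU
  obtain ⟨s, -, hplay, x, hx⟩ := exists_play_forall_mem_of_baireSpace (s₀ := (U, [])) hτ
    (hU.inter hU) (by simpa [ρ] using hUne)
  choose A hA hsA using hplay
  have hAU : ∀ n, IsLegalMove U (A n) := fun n =>
    ⟨(hA n).1, (hA n).2.1, (hA n).2.2.trans inter_subset_right⟩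
  have hxW : ∀ n, x ∈ W (A n) (s n).2 := fun n => by
    simpa [ρ, τ, hsA n] using (hx (n + 1)).1
  have hmem : ∀ n, ∀ m < n, py (A m) (s m).2 ∈ (s n).2 := by
    intro n
    induction n with
    | zero => simp
    | succ n ih =>
      intro m hm
      rw [hsA n]
      rcases Nat.lt_succ_iff_lt_or_eq.1 hm with hm | rfl
      exacts [List.mem_cons_of_mem _ (ih m hm), List.mem_cons_self]
  exact ⟨x, fun n => px (A n) (s n).2, fun n => py (A n) (s n).2,
    fun m n hmn => (hnear _ _ (hAU n) x (hxW n) _ (hmem n m hmn)).le,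
    fun n => hfar _ _ (hAU n) x (hxW n)⟩

theorem exists_isLegalMove_subset_closure_dist_le [BaireSpace X] [CompactSpace Y]
    (F : X → C(Y, E))
    (hF : ∀ y, ∃ D : Set X, Dense D ∧ IsGδ D ∧ ∀ x ∈ D, ContinuousAt (fun x => F x y) x)
    {δ : ℝ} (hδ : 0 < δ) {U : Set X} (hU : IsOpen U) (hUne : U.Nonempty) :
    ∃ V, IsLegalMove U V ∧ ∃ x₀, ∀ y, V ⊆ closure {x ∈ V | ∃ y', dist (F x y) (F x₀ y') ≤ δ} := by
  by_contra! hnot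
  obtain ⟨x, xs, ys, hclose, hfar⟩ :=
    exists_seq_of_forall_not_subset_closure hF hδ hU hUne hnot
  obtain ⟨m, n, -, hlt⟩ :=
    exists_lt_dist_lt_of_forall_dist_le (F x).continuous (fun n => F (xs n)) ys hδ hclose
  exact (hfar n (ys m)).not_gt hlt

end Namioka

/-- Proposition 4.3. -/
theorem exists_finite_net_of_namioka_sections {X Y Z : Type*} [TopologicalSpace X]
    [BaireSpace X] [TopologicalSpace Y] [CompactSpace Y] [TopologicalSpace Z]
    [CompactSpace Z]
    (f : X × (Y × Z) → ℝ)
    (hf2 : ∀ x : X, Continuous fun p : Y × Z => f (x, p))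
    (hfy : ∀ y : Y, NamiokaProperty fun q : X × Z => f (q.1, (y, q.2)))
    (ε : ℝ) (hε : 0 < ε) (U : Set X) (hU : IsOpen U) (hUne : U.Nonempty) :
    ∃ (n : ℕ) (b : Fin n → C(Z, ℝ)) (U₀ : Set X), IsOpen U₀ ∧ U₀.Nonempty ∧ U₀ ⊆ U ∧
      ∀ y : Y, ∃ A : Set X, A ⊆ U₀ ∧ U₀ ⊆ closure A ∧
        ∀ x ∈ A, ∃ k : Fin n, ∀ z : Z, |f (x, (y, z)) - b k z| ≤ ε := by
  let F : X → C(Y, C(Z, ℝ)) := fun x => ContinuousMap.curry ⟨fun p => f (x, p), hf2 x⟩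
  have hF : ∀ y, ∃ D : Set X, Dense D ∧ IsGδ D ∧ ∀ x ∈ D, ContinuousAt (fun x => F x y) x :=
    fun y => let ⟨D, hDdense, hDGδ, hDcont⟩ := hfy y
      ⟨D, hDdense, hDGδ, fun x hx =>
        ContinuousMap.continuousAt_of_forall_continuousAt_uncurry (hDcont x hx)⟩
  obtain ⟨V, ⟨hVo, hVne, hVU⟩, x₀, hV⟩ :=
    exists_isLegalMove_subset_closure_dist_le F hF (half_pos hε) hU hUne
  obtain ⟨n, b, hb⟩ :=
    (isCompact_range (F x₀).continuous).exists_fin_forall_exists_dist_lt (half_pos hε)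
  refine ⟨n, b, V, hVo, hVne, hVU, fun y => ⟨_, sep_subset _ _, hV y, ?_⟩⟩
  rintro x ⟨-, y', hy'⟩
  obtain ⟨k, hk⟩ := hb _ (mem_range_self y')
  refine ⟨k, fun z => ?_⟩
  calc |f (x, (y, z)) - b k z| = dist (F x y z) (b k z) := rfl
    _ ≤ dist (F x y) (b k) := ContinuousMap.dist_apply_le_dist z
    _ ≤ ε := by linarith [dist_triangle (F x y) (F x₀ y') (b k)]
end

section
/- Let X be a Baire space, Y a compact space, Z a metric space, and f : X × Y → Z quasi-continuous in the first variable and continuous in the second variable. Then for every ε > 0 and every nonempty open set U ⊆ X there exist points z₁, …, z_n ∈ Z and a nonempty open set U₀ ⊆ U such that for every x ∈ U₀ and every y ∈ Y there exists k ∈ {1, …, n} with d(f(x,y), z_k) ≤ ε. -/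
/-!
Suppose no finite family of values `ε`-covers the slices on any nonempty open `U₀ ⊆ U`. Each
slice `f (x, ·)` has compact range, so it has a finite `ε / 4`-net; by the Baire property the
points whose slice admits such a net of size `≤ n` are dense in some nonempty open `G ⊆ U`.
Inside `G` one now builds, using quasi-continuity in `x`, shrinking open sets `V` together with
ever larger `ε`-separated sets of values `z`, each of which is tracked within `ε / 8` on all of
`V` by one slice `f (·, y)`. Once there are more than `n` such values, a point of `V` whose slice
has an `ε / 4`-net of size `n` forces two of them within `3ε / 4` of each other.
-/

open Topology

open Set

theorem exists_isOpen_subset_closure_of_iUnion_eq_univ_s13 {X ι : Type*} [TopologicalSpace X]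
    [BaireSpace X] [Countable ι] {S : ι → Set X} (hS : ⋃ i, S i = univ) {U : Set X}
    (hU : IsOpen U) (hUne : U.Nonempty) :
    ∃ i, ∃ G : Set X, IsOpen G ∧ G.Nonempty ∧ G ⊆ U ∧ G ⊆ closure (S i) := by
  have hcover : ⋃ i, (closure (S i) ∪ Uᶜ) = univ :=
    eq_univ_of_univ_subset <| hS ▸ iUnion_mono fun i => subset_closure.trans subset_union_left
  obtain ⟨p, hp, hpU⟩ := (dense_iUnion_interior_of_closed
    (fun i => isClosed_closure.union hU.isClosed_compl) hcover).exists_mem_open hU hUne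
  obtain ⟨i, hpi⟩ := mem_iUnion.1 hp
  exact ⟨i, U ∩ interior (closure (S i) ∪ Uᶜ), hU.inter isOpen_interior, ⟨p, hpU, hpi⟩,
    inter_subset_left, fun x hx => (interior_subset hx.2).resolve_right (not_not_intro hx.1)⟩

theorem QuasiContinuousAt.exists_isOpen_subset_dist_lt {X Z : Type*} [TopologicalSpace X]
    [PseudoMetricSpace Z] {g : X → Z} {x : X} (hg : QuasiContinuousAt g x) {V : Set X}
    (hV : V ∈ 𝓝 x) {δ : ℝ} (hδ : 0 < δ) :
    ∃ G : Set X, IsOpen G ∧ G.Nonempty ∧ G ⊆ V ∧ ∀ x' ∈ G, dist (g x') (g x) < δ := by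
  obtain ⟨G, hGo, hGne, hGV, hGimg⟩ := hg V hV _ (Metric.ball_mem_nhds (g x) hδ)
  exact ⟨G, hGo, hGne, hGV, fun x' hx' => hGimg (mem_image_of_mem g hx')⟩

theorem IsCompact.exists_finset_forall_dist_le {Z : Type*} [PseudoMetricSpace Z] {K : Set Z}
    (hK : IsCompact K) {δ : ℝ} (hδ : 0 < δ) : ∃ T : Finset Z, ∀ z ∈ K, ∃ w ∈ T, dist z w ≤ δ := by
  obtain ⟨t, -, ht, hKt⟩ := hK.finite_cover_balls hδ
  refine ⟨ht.toFinset, fun z hz => ?_⟩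
  obtain ⟨w, hw, hzw⟩ := mem_iUnion₂.1 (hKt hz)
  exact ⟨w, ht.mem_toFinset.2 hw, (Metric.mem_ball.1 hzw).le⟩

theorem Finset.card_le_card_of_pairwise_lt_dist {Z : Type*} [PseudoMetricSpace Z] {ε : ℝ}
    {T W : Finset Z} (hT : (T : Set Z).Pairwise fun a b => ε < dist a b)
    (hTW : ∀ z ∈ T, ∃ w ∈ W, dist z w ≤ ε / 2) : T.card ≤ W.card := by
  choose! φ hφW hφ using hTW
  refine Finset.card_le_card_of_injOn φ hφW fun a ha b hb hab => ?_
  by_contra hne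
  have hab' : dist a b ≤ ε := calc
    dist a b ≤ dist a (φ a) + dist b (φ b) := hab ▸ dist_triangle_right a b (φ a)
    _ ≤ ε := by linarith [hφ a ha, hφ b hb]
  exact (hT ha hb hne).not_ge hab'

section TrackedSeparated

variable {X Y Z : Type*} [PseudoMetricSpace Z] {f : X × Y → Z} {ε : ℝ}
  {V : Set X} {T : Finset Z}

def IsTrackedSeparated (f : X × Y → Z) (ε : ℝ) (V : Set X) (T : Finset Z) : Prop :=
  (T : Set Z).Pairwise (fun a b => ε < dist a b) ∧
    ∀ z ∈ T, ∃ y, ∀ x ∈ V, dist (f (x, y)) z ≤ ε / 8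

theorem IsTrackedSeparated.exists_insert [TopologicalSpace X] [DecidableEq Z]
    (hT : IsTrackedSeparated f ε V T) (hε : 0 < ε) (hV : IsOpen V) {x : X} {y : Y} (hx : x ∈ V)
    (hqc : QuasiContinuousAt (fun x => f (x, y)) x) (hfar : ∀ z ∈ T, ε < dist (f (x, y)) z) :
    ∃ V' ⊆ V, IsOpen V' ∧ V'.Nonempty ∧ IsTrackedSeparated f ε V' (insert (f (x, y)) T) := by
  obtain ⟨V', hV'o, hV'ne, hV'V, hclose⟩ :=
    hqc.exists_isOpen_subset_dist_lt (hV.mem_nhds hx) (by positivity : 0 < ε / 8)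
  refine ⟨V', hV'V, hV'o, hV'ne, ?_, ?_⟩
  · rw [Finset.coe_insert, pairwise_insert]
    exact ⟨hT.1, fun b hb _ => ⟨hfar b hb, dist_comm b _ ▸ hfar b hb⟩⟩
  · rw [Finset.forall_mem_insert]
    exact ⟨⟨y, fun x' hx' => (hclose x' hx').le⟩,
      fun z hz => (hT.2 z hz).imp fun _ hy' x' hx' => hy' x' (hV'V hx')⟩

theorem IsTrackedSeparated.card_le (hT : IsTrackedSeparated f ε V T) {x : X} (hx : x ∈ V)
    {W : Finset Z} (hW : ∀ y, ∃ w ∈ W, dist (f (x, y)) w ≤ ε / 4) : T.card ≤ W.card :=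
  Finset.card_le_card_of_pairwise_lt_dist hT.1 fun z hz => by
    obtain ⟨y, hy⟩ := hT.2 z hz
    obtain ⟨w, hw, hyw⟩ := hW y
    have hzw := dist_triangle_left z w (f (x, y))
    exact ⟨w, hw, by linarith [hy x hx, dist_nonneg (x := f (x, y)) (y := z)]⟩

end TrackedSeparated

theorem exists_finset_isOpen_forall_dist_le {X Y Z : Type*} [TopologicalSpace X] [BaireSpace X]
    [TopologicalSpace Y] [CompactSpace Y] [PseudoMetricSpace Z] (f : X × Y → Z)
    (hf1 : ∀ y : Y, QuasiContinuous fun x : X => f (x, y))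
    (hf2 : ∀ x : X, Continuous fun y : Y => f (x, y)) {ε : ℝ} (hε : 0 < ε) {U : Set X}
    (hU : IsOpen U) (hUne : U.Nonempty) :
    ∃ (T : Finset Z) (U₀ : Set X), IsOpen U₀ ∧ U₀.Nonempty ∧ U₀ ⊆ U ∧
      ∀ x ∈ U₀, ∀ y : Y, ∃ z ∈ T, dist (f (x, y)) z ≤ ε := by
  classical
  set S : ℕ → Set X := fun n =>
    {x | ∃ W : Finset Z, W.card ≤ n ∧ ∀ y, ∃ w ∈ W, dist (f (x, y)) w ≤ ε / 4}
  have hS : ⋃ n, S n = univ := eq_univ_of_forall fun x => by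
    obtain ⟨W, hW⟩ :=
      (isCompact_range (hf2 x)).exists_finset_forall_dist_le (by positivity : 0 < ε / 4)
    exact mem_iUnion.2 ⟨W.card, W, le_rfl, fun y => hW _ ⟨y, rfl⟩⟩
  obtain ⟨n, G, hGo, hGne, hGU, hGS⟩ :=
    exists_isOpen_subset_closure_of_iUnion_eq_univ_s13 hS hU hUne
  by_contra! hfar
  have grow : ∀ m : ℕ, ∃ V ⊆ G, IsOpen V ∧ V.Nonempty ∧
      ∃ T, IsTrackedSeparated f ε V T ∧ m ≤ T.card := by
    intro m
    induction m with
    | zero => exact ⟨G, subset_rfl, hGo, hGne, ∅, ⟨by simp, by simp⟩, le_rfl⟩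
    | succ m ih =>
      obtain ⟨V, hVG, hVo, hVne, T, hT, hmT⟩ := ih
      obtain ⟨x, hx, y, hy⟩ := hfar T V hVo hVne (hVG.trans hGU)
      obtain ⟨V', hV'V, hV'o, hV'ne, hT'⟩ := hT.exists_insert hε hVo hx (hf1 y x) hy
      have hnew : f (x, y) ∉ T := fun h => by simpa [hε.not_gt] using hy _ h
      refine ⟨V', hV'V.trans hVG, hV'o, hV'ne, _, hT', ?_⟩
      rw [Finset.card_insert_of_notMem hnew]
      omega
  obtain ⟨V, hVG, hVo, ⟨v, hv⟩, T, hT, hnT⟩ := grow (n + 1)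
  obtain ⟨x, hxV, W, hWn, hW⟩ := mem_closure_iff.1 (hGS (hVG hv)) V hVo hv
  have := hT.card_le hxV hW
  omega

/-- Proposition 5.1. -/
theorem exists_finite_net_metric {X Y Z : Type*} [TopologicalSpace X] [BaireSpace X]
    [TopologicalSpace Y] [CompactSpace Y] [MetricSpace Z]
    (f : X × Y → Z)
    (hf1 : ∀ y : Y, QuasiContinuous fun x : X => f (x, y))
    (hf2 : ∀ x : X, Continuous fun y : Y => f (x, y))
    (ε : ℝ) (hε : 0 < ε) (U : Set X) (hU : IsOpen U) (hUne : U.Nonempty) :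
    ∃ (n : ℕ) (z : Fin n → Z) (U₀ : Set X), IsOpen U₀ ∧ U₀.Nonempty ∧ U₀ ⊆ U ∧
      ∀ x ∈ U₀, ∀ y : Y, ∃ k : Fin n, dist (f (x, y)) (z k) ≤ ε := by
  obtain ⟨T, U₀, hU₀o, hU₀ne, hU₀U, hT⟩ :=
    exists_finset_isOpen_forall_dist_le f hf1 hf2 hε hU hUne
  refine ⟨T.card, fun k => T.equivFin.symm k, U₀, hU₀o, hU₀ne, hU₀U, fun x hx y => ?_⟩
  obtain ⟨z, hz, hxz⟩ := hT x hx y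
  exact ⟨T.equivFin ⟨z, hz⟩, by simpa using hxz⟩
end
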